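/- arXiv:2312.02639 — 5 statements merged into one kernel-verified Lean document; each statement's English description precedes it below -/
import Mathlib

section
/- For every finite simple graph G, hdim_{Z/2}(N(G)) ≥ ω(G) − 2; that is, if G contains a clique of size m, then the reduced homology H̃_k(N(G); Z/2) is nonzero for some k ≥ m − 2. -/
open SimpleGraph

/-- An abstract simplicial complex on the underlying vertex set `V`. -/
structure Cplx (V : Type) where
  faces : Finset V → Prop
  down_closed : ∀ ⦃σ τ : Finset V⦄, σ ⊆ τ → faces τ → faces σ

/-- The neighborhood complex of a graph: the faces are the subsets of the vertex set
contained in the open neighborhood of some vertex. -/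
def nbdCpx {V : Type} (G : SimpleGraph V) : Cplx V where
  faces σ := ∃ v : V, ∀ u ∈ σ, G.Adj v u
  down_closed := by
    rintro σ τ hst ⟨v, h⟩
    exact ⟨v, fun u hu => h u (hst hu)⟩

section Homology

variable {V : Type} [DecidableEq V] (K : Cplx V) (R : Type) [CommRing R]

/-- The (possibly degenerate) ordered `n`-simplices of `K`. -/
def Smpx (n : ℕ) : Type := {f : Fin (n + 1) → V // K.faces (Finset.image f Finset.univ)}

/-- The `i`-th face of an ordered simplex. -/
def Smpx.face {n : ℕ} (f : Smpx K (n + 1)) (i : Fin (n + 2)) : Smpx K n :=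
  ⟨f.1 ∘ Fin.succAbove i, by
    refine K.down_closed ?_ f.2
    intro x hx
    simp only [Finset.mem_image, Function.comp_apply] at hx ⊢
    obtain ⟨j, _, hj⟩ := hx
    exact ⟨_, Finset.mem_univ _, hj⟩⟩

/-- The simplicial boundary operator on the free modules of chains. -/
noncomputable def bdry (n : ℕ) : (Smpx K (n + 1) →₀ R) →ₗ[R] (Smpx K n →₀ R) :=
  Finsupp.linearCombination R fun f =>
    ∑ i : Fin (n + 2), ((-1 : R) ^ (i : ℕ)) • Finsupp.single (Smpx.face K f i) (1 : R)

/-- The augmentation map, into the free module on the unique `(-1)`-simplex. -/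
noncomputable def aug : (Smpx K 0 →₀ R) →ₗ[R] (Unit →₀ R) :=
  Finsupp.linearCombination R fun _ => Finsupp.single () (1 : R)

/-- Cycles: the kernels of the boundary maps of the augmented chain complex. -/
noncomputable def cyc : (n : ℕ) → Submodule R (Smpx K n →₀ R)
  | 0 => LinearMap.ker (aug K R)
  | n + 1 => LinearMap.ker (bdry K R n)

/-- Boundaries, viewed inside the cycles. -/
noncomputable def bsub (n : ℕ) : Submodule R ↥(cyc K R n) :=
  Submodule.comap (cyc K R n).subtype (LinearMap.range (bdry K R n))

/-- The reduced simplicial homology of `K` with coefficients in `R`, defined via the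
augmented chain complex of ordered simplices. -/
noncomputable def reducedHomology : ℤ → ModuleCat R
  | Int.ofNat n =>
      ModuleCat.of R
        (@HasQuotient.Quotient ↥(cyc K R n) (Submodule R ↥(cyc K R n))
          (@Submodule.hasQuotient R ↥(cyc K R n) _ _ _) (bsub K R n))
  | Int.negSucc 0 => ModuleCat.of R ((Unit →₀ R) ⧸ LinearMap.range (aug K R))
  | Int.negSucc (_ + 1) => ModuleCat.of R PUnit

/-- The `R`-homological dimension of a simplicial complex:
the supremum of the degrees with nonvanishing reduced homology, in `ℤ ∪ {±∞}`. -/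
noncomputable def hdim : EReal :=
  sSup {x : EReal | ∃ n : ℤ, x = ((n : ℝ) : EReal) ∧ Nontrivial (reducedHomology K R n)}

/-- The `R`-homological connectivity of a simplicial complex:
the supremum of the `n` such that all reduced homology in degrees `≤ n` vanishes. -/
noncomputable def conn : EReal :=
  sSup {x : EReal | ∃ n : ℤ, x = ((n : ℝ) : EReal) ∧
    ∀ i : ℤ, i ≤ n → Subsingleton (reducedHomology K R i)}

end Homology

/-!
Over `ℤ/2`, compare `N(G)` with the box complex `B(G)`: its cells are the pairs `(A, B)` of faces
of `N(G)` with every vertex of `A` adjacent to every vertex of `B`, and `(A, B) ↦ (B, A)` is a free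
involution. An `m`-clique `v₀, …, v_{m-1}` gives, by iterated coning, chains `A₀, …, A_{m-2}` of
`B(G)` with `∂ A₀ = (∅, ∅)` and `∂ A_{k+1} = A_k + swap A_k`, the image of the antipodal sphere
`S^{m-2}`. If `H̃_n(N(G)) = 0` for every `n ≥ m - 2`, such a tower continues forever: adding a
common neighbour of `B` to `A` deforms every cycle of `B(G)` onto the cells `(A, ∅)`, which form
the chain complex of `N(G)`. Freeness forbids infinite towers: an equivariant cochain `index`
takes the value `1` on `A_k + swap A_k` for every `k`, so `A_k ≠ 0`, whereas `B(G)` has no cells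
of degree `≥ 2 |V|`.
-/

namespace Finsupp

variable {α R M : Type*} [Semiring R] [AddCommMonoid M] [Module R M] {s : Set α}

theorem apply_mem_of_single_mem {f : (α →₀ R) →ₗ[R] M} {N : Submodule R M}
    (h : ∀ a ∈ s, f (single a 1) ∈ N) {z : α →₀ R} (hz : z ∈ supported R R s) : f z ∈ N := by
  rw [supported_eq_span_single] at hz
  refine (Submodule.map_span_le f _ N).mpr ?_ (Submodule.mem_map_of_mem hz)
  rintro _ ⟨a, ha, rfl⟩
  exact h a ha

theorem eqOn_supported_of_single {f g : (α →₀ R) →ₗ[R] M}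
    (h : ∀ a ∈ s, f (single a 1) = g (single a 1)) : Set.EqOn f g (supported R R s) := by
  rw [supported_eq_span_single]
  exact LinearMap.eqOn_span' (by rintro _ ⟨a, ha, rfl⟩; exact h a ha)

end Finsupp

theorem ZModModule.sum_sum_erase_erase {V M : Type*} [DecidableEq V] [AddCommGroup M]
    [Module (ZMod 2) M] (A : Finset V) (g : Finset V → M) :
    ∑ x ∈ A, ∑ y ∈ A.erase x, g ((A.erase x).erase y) = 0 := by
  rw [Finset.sum_sigma']
  refine Finset.sum_involution (fun q _ => ⟨q.2, q.1⟩) (fun q hq => ?_) (fun q hq _ => ?_)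
    (fun q hq => ?_) (fun _ _ => rfl)
  · rw [Finset.erase_right_comm]
    exact ZModModule.add_self _
  · simp only [Finset.mem_sigma, Finset.mem_erase] at hq
    exact fun h => hq.2.1 (congrArg Sigma.fst h)
  · simp only [Finset.mem_sigma, Finset.mem_erase] at hq ⊢
    exact ⟨hq.2.2, Ne.symm hq.2.1, hq.1⟩

theorem Fin.card_image_univ_eq_iff_injective {V : Type*} [DecidableEq V] {m : ℕ}
    {f : Fin m → V} : (Finset.univ.image f).card = m ↔ Function.Injective f := by
  rw [← Set.injOn_univ, ← Finset.coe_univ, ← Finset.card_image_iff, Finset.card_univ,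
    Fintype.card_fin]

theorem Fin.image_comp_succAbove_of_eq {V : Type*} [DecidableEq V] {m : ℕ}
    {f : Fin (m + 1) → V} {a b : Fin (m + 1)} (hab : f a = f b) (hne : a ≠ b) :
    Finset.univ.image (f ∘ a.succAbove) = Finset.univ.image f := by
  rw [← Finset.image_image, Fin.image_succAbove_univ]
  refine (Finset.image_subset_image (Finset.subset_univ _)).antisymm fun x hx => ?_
  obtain ⟨i, -, rfl⟩ := Finset.mem_image.mp hx
  by_cases hia : i = a
  · subst hia
    exact hab ▸ Finset.mem_image_of_mem f (by simpa using hne.symm)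
  · exact Finset.mem_image_of_mem f (by simpa using hia)

namespace SimpleGraph

variable {V : Type*} {G : SimpleGraph V}

theorem injOn_of_adj {v : ℕ → V} {K : ℕ} (hv : ∀ i < K, ∀ j < K, i ≠ j → G.Adj (v i) (v j)) :
    Set.InjOn v (Set.Iio K) := fun i hi j hj h => by
  by_contra hij
  exact G.loopless.irrefl (v j) (h ▸ hv i hi j hj hij)

theorem IsNClique.exists_adj_seq [Nonempty V] {m : ℕ} {S : Finset V} (hS : G.IsNClique m S) :
    ∃ v : ℕ → V, ∀ i < m, ∀ j < m, i ≠ j → G.Adj (v i) (v j) := by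
  let φ := G.topEmbeddingOfNotCliqueFree hS.not_cliqueFree
  refine ⟨fun i => if h : i < m then φ ⟨i, h⟩ else Classical.arbitrary V, fun i hi j hj hij => ?_⟩
  simp only [dif_pos hi, dif_pos hj]
  exact φ.map_adj_iff.mpr (by simpa [Fin.ext_iff] using hij)

end SimpleGraph

section ReducedHomology

variable {V : Type} [DecidableEq V] {K : Cplx V} {R : Type} [CommRing R]

theorem Smpx.face_val {n : ℕ} (f : Smpx K (n + 1)) (i : Fin (n + 2)) :
    (Smpx.face K f i).1 = f.1 ∘ i.succAbove := rfl

theorem bdry_zmod_two_single {n : ℕ} (f : Smpx K (n + 1)) :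
    bdry K (ZMod 2) n (Finsupp.single f 1) = ∑ i, Finsupp.single (Smpx.face K f i) 1 := by
  rw [bdry, Finsupp.linearCombination_single, one_smul]
  simp [show (-1 : ZMod 2) = 1 from rfl]

theorem mem_range_bdry_of_subsingleton {n : ℕ} (h : Subsingleton (reducedHomology K R n))
    {c : Smpx K n →₀ R} (hc : c ∈ cyc K R n) : c ∈ LinearMap.range (bdry K R n) := by
  have htop : bsub K R n = ⊤ := Submodule.Quotient.subsingleton_iff.mp h
  have hmem : (⟨c, hc⟩ : cyc K R n) ∈ bsub K R n := htop ▸ Submodule.mem_top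
  exact hmem

theorem nontrivial_reducedHomology_neg_one [Nontrivial R] (hK : IsEmpty (Smpx K 0)) :
    Nontrivial (reducedHomology K R (-1)) := by
  change Nontrivial ((Unit →₀ R) ⧸ LinearMap.range (aug K R))
  rw [Submodule.Quotient.nontrivial_iff, ne_eq, LinearMap.range_eq_top]
  intro hsurj
  obtain ⟨c, hc⟩ := hsurj (Finsupp.single () 1)
  rw [Subsingleton.elim c 0, map_zero] at hc
  exact one_ne_zero (Finsupp.single_eq_zero.mp hc.symm)

theorem le_hdim_of_nontrivial {n : ℤ} (h : Nontrivial (reducedHomology K R n)) :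
    ((n : ℝ) : EReal) ≤ hdim K R :=
  le_sSup ⟨n, rfl, h⟩

end ReducedHomology

namespace Box

section Chains

variable {V : Type}

/-- `(A, B)` stands for the cell `A ⊎ B` of the box complex, and `(∅, ∅)` for the augmentation
cell in degree `-1`. -/
abbrev Chain (V : Type) := (Finset V × Finset V) →₀ ZMod 2

noncomputable def swap : Chain V →ₗ[ZMod 2] Chain V :=
  Finsupp.lmapDomain (ZMod 2) (ZMod 2) Prod.swap

theorem swap_single (p : Finset V × Finset V) (c : ZMod 2) :
    swap (Finsupp.single p c) = Finsupp.single p.swap c :=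
  Finsupp.mapDomain_single

theorem swap_swap (z : Chain V) : swap (swap z) = z := by
  suffices (swap ∘ₗ swap : Chain V →ₗ[ZMod 2] Chain V) = LinearMap.id from
    LinearMap.congr_fun this z
  ext p
  simp [swap_single]

variable [DecidableEq V]

noncomputable def boundary : Chain V →ₗ[ZMod 2] Chain V :=
  Finsupp.linearCombination (ZMod 2) fun p =>
    (∑ x ∈ p.1, Finsupp.single (p.1.erase x, p.2) 1) +
      ∑ y ∈ p.2, Finsupp.single (p.1, p.2.erase y) 1

theorem boundary_single (p : Finset V × Finset V) :
    boundary (Finsupp.single p 1) =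
      (∑ x ∈ p.1, Finsupp.single (p.1.erase x, p.2) 1) +
        ∑ y ∈ p.2, Finsupp.single (p.1, p.2.erase y) 1 := by
  rw [boundary, Finsupp.linearCombination_single, one_smul]

theorem boundary_swap (z : Chain V) : boundary (swap z) = swap (boundary z) := by
  suffices (boundary ∘ₗ swap : Chain V →ₗ[ZMod 2] Chain V) = swap ∘ₗ boundary from
    LinearMap.congr_fun this z
  ext p
  simp [swap_single, boundary_single, add_comm]

theorem boundary_boundary (z : Chain V) : boundary (boundary z) = 0 := by
  suffices (boundary ∘ₗ boundary : Chain V →ₗ[ZMod 2] Chain V) = 0 from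
    LinearMap.congr_fun this z
  ext ⟨A, B⟩
  simp only [LinearMap.comp_apply, Finsupp.lsingle_apply, LinearMap.zero_apply,
    Finsupp.coe_zero, Pi.zero_apply, boundary_single, map_add, map_sum, Finset.sum_add_distrib]
  rw [ZModModule.sum_sum_erase_erase A (fun s => Finsupp.single (s, B) 1),
    ZModModule.sum_sum_erase_erase B (fun s => Finsupp.single (A, s) 1), Finset.sum_comm]
  simp [ZModModule.add_self]

end Chains

section Cells

variable {V : Type} (G : SimpleGraph V)

def IsCell (n : ℕ) (p : Finset V × Finset V) : Prop :=
  p.1.card + p.2.card = n + 1 ∧ (∀ a ∈ p.1, ∀ b ∈ p.2, G.Adj a b) ∧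
    (nbdCpx G).faces p.1 ∧ (nbdCpx G).faces p.2

def chains (n : ℕ) : Submodule (ZMod 2) (Chain V) :=
  Finsupp.supported (ZMod 2) (ZMod 2) {p | IsCell G n p}

variable {G} {n : ℕ} {p : Finset V × Finset V}

theorem IsCell.swap (h : IsCell G n p) : IsCell G n p.swap :=
  ⟨by rw [Prod.fst_swap, Prod.snd_swap, add_comm]; exact h.1,
    fun a ha b hb => (h.2.1 b hb a ha).symm, h.2.2.2, h.2.2.1⟩

theorem IsCell.ne_swap (h : IsCell G n p) : p ≠ p.swap := by
  intro hp
  have h12 : p.1 = p.2 := (congrArg Prod.snd hp).symm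
  obtain ⟨a, ha⟩ : p.1.Nonempty := by
    rw [← Finset.card_pos]
    have := h.1
    rw [← h12] at this
    omega
  exact G.loopless.irrefl a (h.2.1 a ha a (h12 ▸ ha))

theorem IsCell.card_le [Fintype V] (h : IsCell G n p) : n + 1 ≤ 2 * Fintype.card V := by
  have := h.1
  have := p.1.card_le_univ
  have := p.2.card_le_univ
  omega

theorem swap_mem_chains {z : Chain V} (hz : z ∈ chains G n) : swap z ∈ chains G n :=
  Finsupp.apply_mem_of_single_mem
    (fun p hp => by rw [swap_single]; exact Finsupp.single_mem_supported _ _ (IsCell.swap hp)) hz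

theorem eq_zero_of_mem_chains [Fintype V] {z : Chain V} (hz : z ∈ chains G n)
    (hn : 2 * Fintype.card V < n + 1) : z = 0 := by
  by_contra hne
  obtain ⟨p, hp⟩ := Finsupp.support_nonempty_iff.mpr hne
  exact absurd ((Finsupp.mem_supported _ _).mp hz hp).card_le (by omega)

variable [DecidableEq V]

theorem IsCell.erase_fst (h : IsCell G (n + 1) p) {x : V} (hx : x ∈ p.1) :
    IsCell G n (p.1.erase x, p.2) := by
  obtain ⟨hcard, hadj, hA, hB⟩ := h
  refine ⟨?_, fun a ha b hb => hadj a (Finset.mem_of_mem_erase ha) b hb,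
    (nbdCpx G).down_closed (Finset.erase_subset _ _) hA, hB⟩
  have := Finset.card_pos.mpr ⟨x, hx⟩
  simp only [Finset.card_erase_of_mem hx]
  omega

theorem IsCell.erase_snd (h : IsCell G (n + 1) p) {y : V} (hy : y ∈ p.2) :
    IsCell G n (p.1, p.2.erase y) :=
  h.swap.erase_fst hy |>.swap

theorem boundary_mem_chains {z : Chain V} (hz : z ∈ chains G (n + 1)) :
    boundary z ∈ chains G n := by
  refine Finsupp.apply_mem_of_single_mem (fun p hp => ?_) hz
  rw [boundary_single]
  refine add_mem (Submodule.sum_mem _ fun x hx => ?_) (Submodule.sum_mem _ fun y hy => ?_)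
  · exact Finsupp.single_mem_supported _ _ (IsCell.erase_fst hp hx)
  · exact Finsupp.single_mem_supported _ _ (IsCell.erase_snd hp hy)

end Cells

section Index

variable {V : Type} [DecidableEq V] {G : SimpleGraph V} {n : ℕ}

open Classical in
/-- `index (n + 1)` is a cochain on cells of degree `n`, one below its subscript. On each free
swap-orbit it puts the value of `index n ∘ boundary` on the representative chosen by a well-order,
which makes `index n ∘ boundary = index (n + 1) ∘ (1 + swap)` (`index_boundary`). -/
noncomputable def index : ℕ → (Chain V →ₗ[ZMod 2] ZMod 2)
  | 0 => Finsupp.lapply (∅, ∅)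
  | n + 1 => Finsupp.linearCombination (ZMod 2) fun p =>
      if WellOrderingRel p p.swap then index n (boundary (Finsupp.single p 1)) else 0

theorem index_zero_swap (z : Chain V) : index 0 (swap z) = index 0 z :=
  Finsupp.mapDomain_apply Prod.swap_injective z (∅, ∅)

open Classical in
theorem index_succ_single (p : Finset V × Finset V) :
    index (n + 1) (Finsupp.single p 1) =
      if WellOrderingRel p p.swap then index n (boundary (Finsupp.single p 1)) else 0 := by
  rw [index, Finsupp.linearCombination_single, one_smul]

theorem index_boundary_of_swap
    (hswap : ∀ p, IsCell G n p →
      index n (swap (boundary (Finsupp.single p 1))) = index n (boundary (Finsupp.single p 1)))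
    {z : Chain V} (hz : z ∈ chains G n) :
    index n (boundary z) = index (n + 1) z + index (n + 1) (swap z) := by
  refine Finsupp.eqOn_supported_of_single (f := index n ∘ₗ boundary)
    (g := index (n + 1) + index (n + 1) ∘ₗ swap) (fun p hp => ?_) hz
  have hboundary : boundary (Finsupp.single p.swap 1) = swap (boundary (Finsupp.single p 1)) := by
    rw [← boundary_swap, swap_single]
  simp only [LinearMap.comp_apply, LinearMap.add_apply, swap_single, index_succ_single,
    Prod.swap_swap, hboundary, hswap p hp]
  rcases trichotomous_of WellOrderingRel p p.swap with hlt | heq | hgt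
  · simp [hlt, asymm_of WellOrderingRel hlt]
  · exact absurd heq (IsCell.ne_swap hp)
  · simp [hgt, asymm_of WellOrderingRel hgt]

theorem index_boundary :
    ∀ n, ∀ z ∈ chains G n, index n (boundary z) = index (n + 1) z + index (n + 1) (swap z)
  | 0 => fun _ => index_boundary_of_swap fun _ _ => index_zero_swap _
  | n + 1 => fun _ => index_boundary_of_swap fun p hp => by
      have h := index_boundary n _ (boundary_mem_chains (Finsupp.single_mem_supported _ 1 hp))
      rw [boundary_boundary, map_zero, eq_comm, CharTwo.add_eq_zero] at h
      exact h.symm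

end Index

section Towers

variable {V : Type} [DecidableEq V] {G : SimpleGraph V}

theorem boundary_add_swap_eq_zero {y : Chain V} (h : swap (boundary y) = boundary y) :
    boundary (y + swap y) = 0 := by
  rw [map_add, boundary_swap, h, ZModModule.add_self]

variable (G) in
/-- The chain-level trace of an equivariant map from the antipodal `N`-sphere. -/
structure IsSwapTower (N : ℕ) (A : ℕ → Chain V) : Prop where
  mem_chains : ∀ k ≤ N, A k ∈ chains G k
  boundary_zero : boundary (A 0) = Finsupp.single (∅, ∅) 1
  boundary_succ : ∀ k < N, boundary (A (k + 1)) = A k + swap (A k)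

namespace IsSwapTower

variable {N : ℕ} {A : ℕ → Chain V}

theorem swap_boundary (h : IsSwapTower G N A) : ∀ k ≤ N, swap (boundary (A k)) = boundary (A k)
  | 0, _ => by rw [h.boundary_zero, swap_single]; rfl
  | k + 1, hk => by rw [h.boundary_succ k hk, map_add, swap_swap, add_comm]

theorem index_add_index_swap (h : IsSwapTower G N A) :
    ∀ k ≤ N, index (k + 1) (A k) + index (k + 1) (swap (A k)) = 1
  | 0, h0 => by
    rw [← index_boundary 0 _ (h.mem_chains 0 h0), h.boundary_zero]
    simp [index]
  | k + 1, hk => by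
    rw [← index_boundary _ _ (h.mem_chains _ hk), h.boundary_succ k hk, map_add,
      h.index_add_index_swap k (by omega)]

theorem le_card [Fintype V] (h : IsSwapTower G N A) : N + 1 ≤ 2 * Fintype.card V := by
  by_contra hN
  have := h.index_add_index_swap N le_rfl
  rw [eq_zero_of_mem_chains (h.mem_chains N le_rfl) (by omega)] at this
  simp at this

theorem succ (h : IsSwapTower G N A) (hmem : A (N + 1) ∈ chains G (N + 1))
    (hb : boundary (A (N + 1)) = A N + swap (A N)) : IsSwapTower G (N + 1) A where
  mem_chains k hk := by
    rcases Nat.lt_succ_iff_lt_or_eq.mp (Nat.lt_succ_of_le hk) with hk | rfl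
    · exact h.mem_chains k (by omega)
    · exact hmem
  boundary_zero := h.boundary_zero
  boundary_succ k hk := by
    rcases Nat.lt_succ_iff_lt_or_eq.mp hk with hk | rfl
    · exact h.boundary_succ k hk
    · exact hb

theorem update (h : IsSwapTower G N A) {y : Chain V} (hy : y ∈ chains G (N + 1))
    (hb : boundary y = A N + swap (A N)) :
    IsSwapTower G (N + 1) (Function.update A (N + 1) y) := by
  have hA : ∀ k ≤ N, Function.update A (N + 1) y k = A k := fun k hk =>
    Function.update_of_ne (by omega) _ _
  refine IsSwapTower.succ ⟨fun k hk => ?_, ?_, fun k hk => ?_⟩ ?_ ?_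
  · rw [hA k hk]; exact h.mem_chains k hk
  · rw [hA 0 (Nat.zero_le _)]; exact h.boundary_zero
  · rw [hA k hk.le, hA (k + 1) hk]; exact h.boundary_succ k hk
  · rwa [Function.update_self]
  · rwa [Function.update_self, hA N le_rfl]

end IsSwapTower

end Towers

section Cones

variable {V : Type}

def disjointCells (C : Finset V) (n : ℕ) : Set (Finset V × Finset V) :=
  {p | p.1 ⊆ C ∧ p.2 ⊆ C ∧ Disjoint p.1 p.2 ∧ p.1.card + p.2.card = n + 1}

variable {G : SimpleGraph V} {C : Finset V} {n : ℕ} {z : Chain V}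

theorem swap_mem_supported_disjointCells
    (hz : z ∈ Finsupp.supported (ZMod 2) (ZMod 2) (disjointCells C n)) :
    swap z ∈ Finsupp.supported (ZMod 2) (ZMod 2) (disjointCells C n) := by
  refine Finsupp.apply_mem_of_single_mem (fun p hp => ?_) hz
  obtain ⟨h1, h2, hd, hc⟩ := hp
  rw [swap_single]
  exact Finsupp.single_mem_supported _ _ ⟨h2, h1, hd.symm, by simp [add_comm, hc]⟩

variable [DecidableEq V]

noncomputable def cone (w : V) : Chain V →ₗ[ZMod 2] Chain V :=
  Finsupp.lmapDomain (ZMod 2) (ZMod 2) fun p => (insert w p.1, p.2)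

theorem cone_single (w : V) (p : Finset V × Finset V) :
    cone w (Finsupp.single p 1) = Finsupp.single (insert w p.1, p.2) 1 :=
  Finsupp.mapDomain_single

theorem boundary_single_insert {w : V} {A : Finset V} (B : Finset V) (hw : w ∉ A) :
    boundary (Finsupp.single (insert w A, B) 1) =
      Finsupp.single (A, B) 1 + ((∑ x ∈ A, Finsupp.single (insert w (A.erase x), B) 1) +
        ∑ y ∈ B, Finsupp.single (insert w A, B.erase y) 1) := by
  rw [boundary_single, Finset.sum_insert hw, Finset.erase_insert hw, add_assoc]
  congr 2
  exact Finset.sum_congr rfl fun x hx => by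
    rw [Finset.erase_insert_of_ne (by rintro rfl; exact hw hx)]

theorem boundary_cone {w : V} {z : Chain V}
    (hz : z ∈ Finsupp.supported (ZMod 2) (ZMod 2) {p | w ∉ p.1}) :
    boundary (cone w z) = z + cone w (boundary z) := by
  refine Finsupp.eqOn_supported_of_single (f := boundary ∘ₗ cone w)
    (g := LinearMap.id + cone w ∘ₗ boundary) (fun p hp => ?_) hz
  simp only [LinearMap.comp_apply, LinearMap.add_apply, LinearMap.id_apply, cone_single,
    boundary_single_insert _ hp, boundary_single, map_add, map_sum]

theorem cone_mem_supported_disjointCells {w : V} (hw : w ∉ C)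
    (hz : z ∈ Finsupp.supported (ZMod 2) (ZMod 2) (disjointCells C n)) :
    cone w z ∈ Finsupp.supported (ZMod 2) (ZMod 2) (disjointCells (insert w C) (n + 1)) := by
  refine Finsupp.apply_mem_of_single_mem (fun p hp => ?_) hz
  obtain ⟨h1, h2, hd, hc⟩ := hp
  have hw1 : w ∉ p.1 := fun h => hw (h1 h)
  have hw2 : w ∉ p.2 := fun h => hw (h2 h)
  rw [cone_single]
  refine Finsupp.single_mem_supported _ _ ⟨Finset.insert_subset_insert w h1,
    h2.trans (Finset.subset_insert w C), Finset.disjoint_insert_left.mpr ⟨hw2, hd⟩, ?_⟩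
  simp only [Finset.card_insert_of_notMem hw1]
  omega

theorem isCell_of_mem_disjointCells {w : V} (hC : G.IsClique (insert w C : Finset V))
    (hw : w ∉ C) {p : Finset V × Finset V} (hp : p ∈ disjointCells C n) : IsCell G n p := by
  obtain ⟨h1, h2, hd, hc⟩ := hp
  have hadj : ∀ u ∈ C, G.Adj w u := fun u hu =>
    hC (by simp) (by simp [hu]) (by rintro rfl; exact hw hu)
  refine ⟨hc, fun a ha b hb => ?_, ⟨w, fun u hu => hadj u (h1 hu)⟩, ⟨w, fun u hu => hadj u (h2 hu)⟩⟩
  exact hC (by simp [h1 ha]) (by simp [h2 hb])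
    (by rintro rfl; exact Finset.disjoint_left.mp hd ha hb)

end Cones

section Ladder

variable {V : Type} [DecidableEq V] {G : SimpleGraph V} {v : ℕ → V} {N : ℕ}

noncomputable def ladder (v : ℕ → V) : ℕ → Chain V
  | 0 => Finsupp.single ({v 0}, ∅) 1
  | k + 1 => cone (v (k + 1)) (ladder v k + swap (ladder v k))

theorem notMem_image_range {K : ℕ} (hv : Set.InjOn v (Set.Iio K)) {k : ℕ} (hk : k + 1 < K) :
    v (k + 1) ∉ (Finset.range (k + 1)).image v := by
  simp only [Finset.mem_image, Finset.mem_range, not_exists, not_and]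
  intro i hi h
  have := hv (Set.mem_Iio.mpr (by omega : i < K)) (Set.mem_Iio.mpr hk) h
  omega

theorem ladder_mem_supported {K : ℕ} (hv : Set.InjOn v (Set.Iio K)) :
    ∀ k < K, ladder v k ∈
      Finsupp.supported (ZMod 2) (ZMod 2) (disjointCells ((Finset.range (k + 1)).image v) k)
  | 0, _ => Finsupp.single_mem_supported _ _ ⟨by simp, by simp, by simp, by simp⟩
  | k + 1, hk => by
    have h := ladder_mem_supported hv k (by omega)
    rw [Finset.range_add_one, Finset.image_insert]
    exact cone_mem_supported_disjointCells (notMem_image_range hv hk)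
      (add_mem h (swap_mem_supported_disjointCells h))

theorem ladder_mem_chains (hv : ∀ i < N + 2, ∀ j < N + 2, i ≠ j → G.Adj (v i) (v j)) :
    ∀ k ≤ N, ladder v k ∈ chains G k := by
  intro k hk
  have hinj := G.injOn_of_adj hv
  refine Finsupp.supported_mono (fun p hp => ?_) (ladder_mem_supported hinj k (by omega))
  refine isCell_of_mem_disjointCells (w := v (k + 1)) ?_ (notMem_image_range hinj (by omega)) hp
  rw [← Finset.image_insert, ← Finset.range_add_one, Finset.coe_image]
  rintro _ ⟨i, hi, rfl⟩ _ ⟨j, hj, rfl⟩ hne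
  simp only [Finset.coe_range, Set.mem_Iio] at hi hj
  exact hv i (by omega) j (by omega) (by rintro rfl; exact hne rfl)

theorem isSwapTower_ladder (hv : ∀ i < N + 2, ∀ j < N + 2, i ≠ j → G.Adj (v i) (v j)) :
    IsSwapTower G N (ladder v) := by
  induction N with
  | zero =>
    refine ⟨ladder_mem_chains hv, ?_, fun k hk => absurd hk (Nat.not_lt_zero k)⟩
    simp [ladder, boundary_single]
  | succ N ih =>
    have htower := ih fun i hi j hj => hv i (by omega) j (by omega)
    refine htower.succ (ladder_mem_chains hv (N + 1) le_rfl) ?_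
    have hinj := G.injOn_of_adj hv
    have hX := add_mem (ladder_mem_supported hinj N (by omega))
      (swap_mem_supported_disjointCells (ladder_mem_supported hinj N (by omega)))
    rw [ladder, boundary_cone (Finsupp.supported_mono (fun p hp h => ?_) hX),
      boundary_add_swap_eq_zero (htower.swap_boundary N le_rfl), map_zero, add_zero]
    exact notMem_image_range hinj (by omega) (hp.1 h)

end Ladder

section Homotopy

variable {V : Type} [DecidableEq V] {G : SimpleGraph V} {n : ℕ}

noncomputable def homotopy (w : Finset V → V) : Chain V →ₗ[ZMod 2] Chain V :=
  Finsupp.linearCombination (ZMod 2) fun p =>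
    if p.2.Nonempty ∧ w p.2 ∉ p.1 then Finsupp.single (insert (w p.2) p.1, p.2) 1 else 0

variable {w : Finset V → V}

theorem homotopy_single (p : Finset V × Finset V) :
    homotopy w (Finsupp.single p 1) =
      if p.2.Nonempty ∧ w p.2 ∉ p.1 then Finsupp.single (insert (w p.2) p.1, p.2) 1 else 0 := by
  rw [homotopy, Finsupp.linearCombination_single, one_smul]

theorem homotopy_single_of_notMem {A B : Finset V} (hB : B.Nonempty) (hw : w B ∉ A) :
    homotopy w (Finsupp.single (A, B) 1) = Finsupp.single (insert (w B) A, B) 1 := by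
  rw [homotopy_single, if_pos ⟨hB, hw⟩]

theorem homotopy_single_of_mem {A B : Finset V} (hw : w B ∈ A) :
    homotopy w (Finsupp.single (A, B) 1) = 0 := by
  rw [homotopy_single, if_neg fun h => h.2 hw]

theorem homotopy_single_of_empty (A : Finset V) :
    homotopy w (Finsupp.single (A, ∅) 1) = 0 := by
  rw [homotopy_single, if_neg fun h => Finset.not_nonempty_empty h.1]

theorem homotopy_single_mem_supported (p : Finset V × Finset V) :
    homotopy w (Finsupp.single p 1) ∈ Finsupp.supported (ZMod 2) (ZMod 2) {q | q.2 = p.2} := by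
  rw [homotopy_single]
  split_ifs
  · exact Finsupp.single_mem_supported _ _ rfl
  · exact zero_mem _

theorem homotopy_mem_chains (hw : ∀ B, (nbdCpx G).faces B → ∀ u ∈ B, G.Adj (w B) u)
    {z : Chain V} (hz : z ∈ chains G n) : homotopy w z ∈ chains G (n + 1) := by
  refine Finsupp.apply_mem_of_single_mem (fun p hp => ?_) hz
  obtain ⟨hcard, hadj, hA, hB⟩ := hp
  rw [homotopy_single]
  split_ifs with h
  · obtain ⟨⟨b, hb⟩, hwA⟩ := h
    have hwB := hw p.2 hB
    refine Finsupp.single_mem_supported _ _ ⟨?_, fun a ha b' hb' => ?_, ⟨b, fun u hu => ?_⟩, hB⟩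
    · simp only [Finset.card_insert_of_notMem hwA]
      omega
    · rcases Finset.mem_insert.mp ha with rfl | ha
      · exact hwB b' hb'
      · exact hadj a ha b' hb'
    · rcases Finset.mem_insert.mp hu with rfl | hu
      · exact (hwB b hb).symm
      · exact (hadj u hu b hb).symm
  · exact zero_mem _

/-- If `w B ∉ A`, the cells `(insert (w B) (A.erase x), B)` cancel in pairs; if `w B ∈ A`, the
term `x = w B` of `homotopy w (boundary (A, B))` gives back `(A, B)`. Either way only cells with a
smaller second component survive. -/
theorem single_add_homotopy_mem_supported {A B : Finset V} (hB : B.Nonempty) :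
    Finsupp.single (A, B) 1 + boundary (homotopy w (Finsupp.single (A, B) 1)) +
        homotopy w (boundary (Finsupp.single (A, B) 1)) ∈
      Finsupp.supported (ZMod 2) (ZMod 2) {q | q.2.card < B.card} := by
  have hlt : ∀ y ∈ B, (B.erase y).card < B.card := fun y hy => Finset.card_erase_lt_of_mem hy
  have hR : ∑ y ∈ B, homotopy w (Finsupp.single (A, B.erase y) 1) ∈
      Finsupp.supported (ZMod 2) (ZMod 2) {q | q.2.card < B.card} :=
    Submodule.sum_mem _ fun y hy => Finsupp.supported_mono
      (Set.ofPred_subset_ofPred.mpr fun q (hq : q.2 = B.erase y) => hq ▸ hlt y hy)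
      (homotopy_single_mem_supported _)
  rw [boundary_single, map_add, map_sum, map_sum]
  by_cases hwA : w B ∈ A
  · have hsum : ∑ x ∈ A, homotopy w (Finsupp.single (A.erase x, B) 1) =
        Finsupp.single (A, B) 1 := by
      rw [Finset.sum_eq_single_of_mem _ hwA fun x hx hxw => homotopy_single_of_mem
        (Finset.mem_erase.mpr ⟨Ne.symm hxw, hwA⟩), homotopy_single_of_notMem hB
        (Finset.notMem_erase _ _), Finset.insert_erase hwA]
    rw [homotopy_single_of_mem hwA, map_zero, add_zero, hsum, ← add_assoc, ZModModule.add_self,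
      zero_add]
    exact hR
  · have hsum : ∑ x ∈ A, homotopy w (Finsupp.single (A.erase x, B) 1) =
        ∑ x ∈ A, Finsupp.single (insert (w B) (A.erase x), B) 1 :=
      Finset.sum_congr rfl fun x _ =>
        homotopy_single_of_notMem hB fun h => hwA (Finset.mem_of_mem_erase h)
    rw [homotopy_single_of_notMem hB hwA, boundary_single_insert B hwA, hsum]
    have hY : ∑ y ∈ B, Finsupp.single (insert (w B) A, B.erase y) (1 : ZMod 2) ∈
        Finsupp.supported (ZMod 2) (ZMod 2) {q | q.2.card < B.card} :=
      Submodule.sum_mem _ fun y hy => Finsupp.single_mem_supported _ _ (hlt y hy)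
    convert add_mem hY hR using 1
    abel_nf
    simp only [two_zsmul, ZModModule.add_self, zero_add]

theorem homotopy_boundary_single_of_empty (A : Finset V) :
    homotopy w (boundary (Finsupp.single (A, ∅) 1)) = 0 := by
  simp [boundary_single, homotopy_single_of_empty]

theorem single_add_homotopy_mem_supported_le {j : ℕ} {p : Finset V × Finset V}
    (hp : p.2.card ≤ j + 1) :
    Finsupp.single p 1 + boundary (homotopy w (Finsupp.single p 1)) +
        homotopy w (boundary (Finsupp.single p 1)) ∈
      Finsupp.supported (ZMod 2) (ZMod 2) {q | q.2.card ≤ j} := by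
  obtain ⟨A, B⟩ := p
  rcases B.eq_empty_or_nonempty with rfl | hB
  · rw [homotopy_single_of_empty, homotopy_boundary_single_of_empty, map_zero, add_zero,
      add_zero]
    exact Finsupp.single_mem_supported _ _ (by simp)
  · exact Finsupp.supported_mono (Set.ofPred_subset_ofPred.mpr fun q (hq : q.2.card < B.card) =>
      by simp only at hp; omega) (single_add_homotopy_mem_supported hB)

theorem exists_add_boundary_mem_supported (hw : ∀ B, (nbdCpx G).faces B → ∀ u ∈ B, G.Adj (w B) u) :
    ∀ j, ∀ z ∈ chains G n, boundary z = 0 →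
      z ∈ Finsupp.supported (ZMod 2) (ZMod 2) {p | p.2.card ≤ j} →
      ∃ y ∈ chains G (n + 1), z + boundary y ∈ Finsupp.supported (ZMod 2) (ZMod 2) {p | p.2 = ∅}
  | 0, z, _, _, hj => ⟨0, zero_mem _, by
      rw [map_zero, add_zero]
      exact Finsupp.supported_mono (Set.ofPred_subset_ofPred.mpr fun p => Finset.card_eq_zero.mp
        ∘ Nat.le_zero.mp) hj⟩
  | j + 1, z, hz, hbz, hj => by
    have hz₁ : z + boundary (homotopy w z) ∈
        Finsupp.supported (ZMod 2) (ZMod 2) {p | p.2.card ≤ j} := by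
      have hL : z + boundary (homotopy w z) =
          (LinearMap.id + boundary ∘ₗ homotopy w + homotopy w ∘ₗ boundary :
            Chain V →ₗ[ZMod 2] Chain V) z := by
        simp [hbz]
      rw [hL]
      exact Finsupp.apply_mem_of_single_mem (fun p hp => by
        simpa using single_add_homotopy_mem_supported_le (w := w) hp) hj
    obtain ⟨y, hy, hzy⟩ := exists_add_boundary_mem_supported hw j _
      (add_mem hz (boundary_mem_chains (homotopy_mem_chains hw hz)))
      (by rw [map_add, hbz, boundary_boundary, add_zero]) hz₁
    refine ⟨homotopy w z + y, add_mem (homotopy_mem_chains hw hz) hy, ?_⟩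
    rwa [map_add, ← add_assoc]

end Homotopy

section Unsorted

variable {V : Type} [DecidableEq V] (K : Cplx V)

/-- The cells `(A, ∅)` carry the unordered simplicial chain complex of `K`; `ofSmpx` forgets the
order of an ordered simplex and kills the degenerate ones. -/
def faceCells (n : ℕ) : Set (Finset V × Finset V) :=
  {p | K.faces p.1 ∧ p.1.card = n + 1 ∧ p.2 = ∅}

noncomputable def ofSmpx (n : ℕ) : (Smpx K n →₀ ZMod 2) →ₗ[ZMod 2] Chain V :=
  Finsupp.linearCombination (ZMod 2) fun f =>
    if (Finset.univ.image f.1).card = n + 1 then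
      Finsupp.single (Finset.univ.image f.1, ∅) 1 else 0

variable {K}

theorem ofSmpx_single {n : ℕ} (f : Smpx K n) :
    ofSmpx K n (Finsupp.single f 1) =
      if (Finset.univ.image f.1).card = n + 1 then
        Finsupp.single (Finset.univ.image f.1, ∅) 1 else 0 := by
  rw [ofSmpx, Finsupp.linearCombination_single, one_smul]

theorem ofSmpx_mem_supported {n : ℕ} (c : Smpx K n →₀ ZMod 2) :
    ofSmpx K n c ∈ Finsupp.supported (ZMod 2) (ZMod 2) (faceCells K n) := by
  refine Finsupp.apply_mem_of_single_mem (s := Set.univ) (fun f _ => ?_)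
    (by rw [Finsupp.supported_univ]; trivial)
  rw [ofSmpx_single]
  split_ifs with h
  · exact Finsupp.single_mem_supported _ _ ⟨f.2, h, rfl⟩
  · exact zero_mem _

theorem boundary_ofSmpx_single {n : ℕ} (f : Smpx K (n + 1)) :
    boundary (ofSmpx K (n + 1) (Finsupp.single f 1)) =
      ofSmpx K n (bdry K (ZMod 2) n (Finsupp.single f 1)) := by
  rw [bdry_zmod_two_single, map_sum, ofSmpx_single]
  simp_rw [ofSmpx_single, Smpx.face_val]
  split_ifs with hinj
  · rw [Fin.card_image_univ_eq_iff_injective] at hinj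
    have hface : ∀ i, Finset.univ.image (f.1 ∘ i.succAbove) =
        (Finset.univ.image f.1).erase (f.1 i) := fun i => by
      rw [← Finset.image_image, Fin.image_succAbove_univ, Finset.compl_singleton,
        Finset.image_erase hinj]
    have hcard : ∀ i, ((Finset.univ.image f.1).erase (f.1 i)).card = n + 1 := fun i => by
      rw [Finset.card_erase_of_mem (Finset.mem_image_of_mem _ (Finset.mem_univ _)),
        Fin.card_image_univ_eq_iff_injective.mpr hinj]
      rfl
    simp only [hface, hcard, if_true, boundary_single, Finset.sum_empty, add_zero]
    rw [Finset.sum_image fun _ _ _ _ h => hinj h]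
  · rw [map_zero, eq_comm]
    rw [Fin.card_image_univ_eq_iff_injective] at hinj
    obtain ⟨a, b, hab, hne⟩ := Function.not_injective_iff.mp hinj
    rw [← Finset.sum_subset (Finset.subset_univ {a, b}) fun i _ hi => ?_, Finset.sum_pair hne]
    · simp only [Fin.image_comp_succAbove_of_eq hab hne,
        Fin.image_comp_succAbove_of_eq hab.symm hne.symm, ZModModule.add_self]
    simp only [Finset.mem_insert, Finset.mem_singleton, not_or] at hi
    refine if_neg fun hcard => ?_
    have hi_inj := Fin.card_image_univ_eq_iff_injective.mp hcard
    obtain ⟨a', rfl⟩ := Fin.exists_succAbove_eq (Ne.symm hi.1)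
    obtain ⟨b', rfl⟩ := Fin.exists_succAbove_eq (Ne.symm hi.2)
    exact hne (congrArg _ (hi_inj hab))

theorem boundary_ofSmpx {n : ℕ} (c : Smpx K (n + 1) →₀ ZMod 2) :
    boundary (ofSmpx K (n + 1) c) = ofSmpx K n (bdry K (ZMod 2) n c) := by
  suffices (boundary ∘ₗ ofSmpx K (n + 1) : _ →ₗ[ZMod 2] Chain V) = ofSmpx K n ∘ₗ bdry K (ZMod 2) n
    from LinearMap.congr_fun this c
  ext f : 2
  simpa using boundary_ofSmpx_single f

end Unsorted

section Sorted

variable {V : Type} [LinearOrder V] {K : Cplx V} {n : ℕ}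

noncomputable def sortedSmpx {A : Finset V} (hA : K.faces A) (hcard : A.card = n + 1) :
    Smpx K n :=
  ⟨A.orderEmbOfFin hcard, by rwa [Finset.image_orderEmbOfFin_univ]⟩

theorem face_sortedSmpx {A : Finset V} (hA : K.faces A) (hcard : A.card = n + 2)
    (i : Fin (n + 2)) :
    Smpx.face K (sortedSmpx hA hcard) i =
      sortedSmpx (K.down_closed (A.erase_subset _) hA)
        (by rw [Finset.card_erase_of_mem (A.orderEmbOfFin_mem hcard i), hcard]; rfl) := by
  refine Subtype.ext (Finset.orderEmbOfFin_unique _ (fun j => ?_)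
    ((A.orderEmbOfFin hcard).strictMono.comp (Fin.strictMono_succAbove i)))
  refine Finset.mem_erase.mpr ⟨fun h => Fin.succAbove_ne i j ?_, A.orderEmbOfFin_mem hcard _⟩
  exact (A.orderEmbOfFin hcard).injective h

variable (K) in
open Classical in
noncomputable def toSmpx (n : ℕ) : Chain V →ₗ[ZMod 2] (Smpx K n →₀ ZMod 2) :=
  Finsupp.linearCombination (ZMod 2) fun p =>
    if h : K.faces p.1 ∧ p.1.card = n + 1 then Finsupp.single (sortedSmpx h.1 h.2) 1 else 0

theorem toSmpx_single {A : Finset V} (hA : K.faces A) (hcard : A.card = n + 1) (B : Finset V) :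
    toSmpx K n (Finsupp.single (A, B) 1) = Finsupp.single (sortedSmpx hA hcard) 1 := by
  rw [toSmpx, Finsupp.linearCombination_single, one_smul, dif_pos ⟨hA, hcard⟩]

theorem ofSmpx_toSmpx {z : Chain V} (hz : z ∈ Finsupp.supported (ZMod 2) (ZMod 2) (faceCells K n)) :
    ofSmpx K n (toSmpx K n z) = z := by
  refine Finsupp.eqOn_supported_of_single (f := ofSmpx K n ∘ₗ toSmpx K n) (g := LinearMap.id)
    (fun p hp => ?_) hz
  obtain ⟨A, B⟩ := p
  obtain ⟨hA, hcard, rfl : B = ∅⟩ := hp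
  simp only [LinearMap.comp_apply, LinearMap.id_apply, toSmpx_single hA hcard, ofSmpx_single]
  simp [sortedSmpx, Finset.image_orderEmbOfFin_univ, hcard]

theorem bdry_toSmpx {z : Chain V}
    (hz : z ∈ Finsupp.supported (ZMod 2) (ZMod 2) (faceCells K (n + 1))) :
    bdry K (ZMod 2) n (toSmpx K (n + 1) z) = toSmpx K n (boundary z) := by
  refine Finsupp.eqOn_supported_of_single (f := bdry K (ZMod 2) n ∘ₗ toSmpx K (n + 1))
    (g := toSmpx K n ∘ₗ boundary) (fun p hp => ?_) hz
  obtain ⟨A, B⟩ := p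
  obtain ⟨hA, hcard, rfl : B = ∅⟩ := hp
  simp only [LinearMap.comp_apply, toSmpx_single hA hcard, bdry_zmod_two_single, face_sortedSmpx,
    boundary_single, Finset.sum_empty, add_zero, map_sum]
  have himage := Finset.sum_image (s := Finset.univ) (g := A.orderEmbOfFin hcard)
    (f := fun x => toSmpx K n (Finsupp.single (A.erase x, ∅) 1))
    fun _ _ _ _ h => (A.orderEmbOfFin hcard).injective h
  rw [Finset.image_orderEmbOfFin_univ] at himage
  rw [himage]
  refine Finset.sum_congr rfl fun i _ => (toSmpx_single _ _ _).symm

theorem aug_toSmpx {z : Chain V} (hz : z ∈ Finsupp.supported (ZMod 2) (ZMod 2) (faceCells K 0)) :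
    aug K (ZMod 2) (toSmpx K 0 z) = Finsupp.single () (boundary z (∅, ∅)) := by
  refine Finsupp.eqOn_supported_of_single (f := aug K (ZMod 2) ∘ₗ toSmpx K 0)
    (g := Finsupp.lsingle () ∘ₗ Finsupp.lapply (∅, ∅) ∘ₗ boundary) (fun p hp => ?_) hz
  obtain ⟨A, B⟩ := p
  obtain ⟨hA, hcard, rfl : B = ∅⟩ := hp
  obtain ⟨a, rfl⟩ := Finset.card_eq_one.mp hcard
  simp [toSmpx_single hA hcard, aug, boundary_single]

theorem exists_boundary_ofSmpx_eq (hH : Subsingleton (reducedHomology K (ZMod 2) n))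
    {z : Chain V} (hz : z ∈ Finsupp.supported (ZMod 2) (ZMod 2) (faceCells K n))
    (hbz : boundary z = 0) : ∃ c, boundary (ofSmpx K (n + 1) c) = z := by
  have hcyc : toSmpx K n z ∈ cyc K (ZMod 2) n := by
    cases n with
    | zero =>
      change _ ∈ LinearMap.ker (aug K (ZMod 2))
      rw [LinearMap.mem_ker, aug_toSmpx hz, hbz, Finsupp.coe_zero, Pi.zero_apply,
        Finsupp.single_zero]
    | succ n =>
      change _ ∈ LinearMap.ker (bdry K (ZMod 2) n)
      rw [LinearMap.mem_ker, bdry_toSmpx hz, hbz, map_zero]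
  obtain ⟨c, hc⟩ := mem_range_bdry_of_subsingleton hH hcyc
  exact ⟨c, by rw [boundary_ofSmpx, hc, ofSmpx_toSmpx hz]⟩

end Sorted

section Filling

variable {V : Type} {G : SimpleGraph V} {n : ℕ}

theorem mem_supported_faceCells [DecidableEq V] {z : Chain V} (hz : z ∈ chains G n)
    (hz' : z ∈ Finsupp.supported (ZMod 2) (ZMod 2) {p | p.2 = ∅}) :
    z ∈ Finsupp.supported (ZMod 2) (ZMod 2) (faceCells (nbdCpx G) n) := by
  have hboth := Finsupp.supported_inter (R := ZMod 2) (M := ZMod 2) {p | IsCell G n p}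
    {p : Finset V × Finset V | p.2 = ∅} ▸ Submodule.mem_inf.mpr ⟨hz, hz'⟩
  refine Finsupp.supported_mono (fun p hp => ?_) hboth
  obtain ⟨hp, hp2 : p.2 = ∅⟩ := hp
  exact ⟨hp.2.2.1, by simpa [hp2] using hp.1, hp2⟩

theorem ofSmpx_mem_chains [DecidableEq V] (c : Smpx (nbdCpx G) n →₀ ZMod 2) :
    ofSmpx (nbdCpx G) n c ∈ chains G n := by
  refine Finsupp.supported_mono (fun p hp => ?_) (ofSmpx_mem_supported c)
  obtain ⟨hA, hcard, hB⟩ := hp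
  obtain ⟨v, -⟩ := id hA
  exact ⟨by simp [hcard, hB], by simp [hB], hA, ⟨v, by simp [hB]⟩⟩

theorem exists_mem_chains_boundary_eq [LinearOrder V] [Nonempty V]
    (hH : Subsingleton (reducedHomology (nbdCpx G) (ZMod 2) n)) {z : Chain V}
    (hz : z ∈ chains G n) (hbz : boundary z = 0) : ∃ y ∈ chains G (n + 1), boundary y = z := by
  have hw : ∀ B : Finset V, ∃ w : V, (nbdCpx G).faces B → ∀ u ∈ B, G.Adj w u := fun B =>
    (em ((nbdCpx G).faces B)).elim (fun ⟨v, hv⟩ => ⟨v, fun _ => hv⟩)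
      fun h => ⟨Classical.arbitrary V, fun h' => (h h').elim⟩
  choose w hw using hw
  have hzj : z ∈ Finsupp.supported (ZMod 2) (ZMod 2) {p | p.2.card ≤ n + 1} :=
    Finsupp.supported_mono (fun p (hp : IsCell G n p) => show p.2.card ≤ n + 1 by
      have := hp.1; omega) hz
  obtain ⟨y, hy, hzy⟩ := exists_add_boundary_mem_supported hw (n + 1) z hz hbz hzj
  have hz' : z + boundary y ∈ chains G n := add_mem hz (boundary_mem_chains hy)
  obtain ⟨c, hc⟩ := exists_boundary_ofSmpx_eq hH (mem_supported_faceCells hz' hzy)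
    (by rw [map_add, hbz, boundary_boundary, add_zero])
  refine ⟨y + ofSmpx (nbdCpx G) (n + 1) c, add_mem hy (ofSmpx_mem_chains c), ?_⟩
  rw [map_add, hc, ← add_assoc, add_comm (boundary y), add_assoc, ZModModule.add_self, add_zero]

end Filling

end Box

theorem exists_nontrivial_reducedHomology_nbdCpx {V : Type} [Fintype V] [LinearOrder V]
    {G : SimpleGraph V} {N : ℕ} {S : Finset V} (hS : G.IsNClique (N + 2) S) :
    ∃ n ≥ N, Nontrivial (reducedHomology (nbdCpx G) (ZMod 2) n) := by
  by_contra! h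
  have : Nonempty V := by
    obtain ⟨x, -⟩ := Finset.card_pos.mp (hS.card_eq ▸ Nat.succ_pos _ : 0 < S.card)
    exact ⟨x⟩
  obtain ⟨v, hv⟩ := hS.exists_adj_seq
  have htower : ∀ K, ∃ A, Box.IsSwapTower G (N + K) A := by
    intro K
    induction K with
    | zero => exact ⟨_, Box.isSwapTower_ladder hv⟩
    | succ K ih =>
      obtain ⟨A, hA⟩ := ih
      obtain ⟨y, hy, hby⟩ := Box.exists_mem_chains_boundary_eq (h (N + K) (by omega))
        (add_mem (hA.mem_chains _ le_rfl) (Box.swap_mem_chains (hA.mem_chains _ le_rfl)))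
        (Box.boundary_add_swap_eq_zero (hA.swap_boundary _ le_rfl))
      exact ⟨_, hA.update hy hby⟩
  obtain ⟨A, hA⟩ := htower (2 * Fintype.card V)
  have := hA.le_card
  omega

theorem isEmpty_smpx_nbdCpx_zero {V : Type} [Fintype V] [DecidableEq V] {G : SimpleGraph V}
    (hG : G.cliqueNum ≤ 1) : IsEmpty (Smpx (nbdCpx G) 0) := by
  refine ⟨fun f => ?_⟩
  obtain ⟨v, hv⟩ := f.2
  have hadj := hv (f.1 0) (Finset.mem_image_of_mem _ (Finset.mem_univ 0))
  have := IsClique.card_le_cliqueNum (t := {v, f.1 0})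
    (tc := by rw [Finset.coe_pair]; exact G.isClique_pair.mpr fun _ => hadj)
  rw [Finset.card_pair (G.ne_of_adj hadj)] at this
  omega

/-- Lemma 4.4: for every finite simple graph `G`,
`hdim_{ℤ/2}(N(G)) ≥ ω(G) - 2`. -/
theorem hdim_nbd_ge_cliqueNum_sub_two {V : Type} [Fintype V] [DecidableEq V]
    (G : SimpleGraph V) :
    ((G.cliqueNum : ℝ) : EReal) - 2 ≤ hdim (nbdCpx G) (ZMod 2) := by
  have hcast (m : ℕ) (n : ℤ) (h : (m : ℤ) ≤ n + 2) : ((m : ℝ) : EReal) - 2 ≤ ((n : ℝ) : EReal) := by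
    rw [show (2 : EReal) = ((2 : ℝ) : EReal) from rfl, ← EReal.coe_sub, EReal.coe_le_coe_iff]
    have : (m : ℝ) ≤ n + 2 := by exact_mod_cast h
    linarith
  obtain ⟨S, hS⟩ := G.exists_isNClique_cliqueNum
  rcases Nat.lt_or_ge G.cliqueNum 2 with hsmall | hlarge
  · have hH := nontrivial_reducedHomology_neg_one (R := ZMod 2)
      (isEmpty_smpx_nbdCpx_zero (G := G) (by omega))
    exact (hcast _ _ (by omega)).trans (le_hdim_of_nontrivial hH)
  · obtain ⟨N, hN⟩ := Nat.exists_eq_add_of_le' hlarge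
    -- any linear order serves to sort the faces of `N(G)`
    let _ : LinearOrder V := WellOrderingRel.isWellOrder.linearOrder
    obtain ⟨n, hn, hH⟩ := exists_nontrivial_reducedHomology_nbdCpx (hN ▸ hS)
    have hH' : Nontrivial (reducedHomology (nbdCpx G) (ZMod 2) n) := by convert hH
    exact (hcast _ n (by omega)).trans (le_hdim_of_nontrivial hH')
end

section
/- Let G be a chordal graph with at least one edge. Then there exists a non-isolated vertex w of G such that the neighborhood complex N(Ḡ) collapses to the subcomplex N(complement of G − w) (regarded as a complex on underlying set V(G) with w a ghost vertex) and α(G) = α(G − w), where G − w is the induced subgraph of G on V(G) − {w}. -/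
open SimpleGraph

/-- A facet of a simplicial complex is a maximal face. -/
def Cplx.IsFacet {V : Type} (K : Cplx V) (σ : Finset V) : Prop :=
  K.faces σ ∧ ∀ ⦃τ : Finset V⦄, K.faces τ → σ ⊆ τ → σ = τ

/-- A free face: a nonempty face that is not a facet and is contained in exactly
one facet. -/
def Cplx.IsFreeFace {V : Type} (K : Cplx V) (σ : Finset V) : Prop :=
  σ.Nonempty ∧ K.faces σ ∧ ¬ K.IsFacet σ ∧ ∃! τ : Finset V, K.IsFacet τ ∧ σ ⊆ τ

/-- An elementary collapse: remove all faces containing some free face. -/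
def CollapseStep {V : Type} (K L : Cplx V) : Prop :=
  ∃ σ : Finset V, K.IsFreeFace σ ∧ ∀ τ : Finset V, L.faces τ ↔ (K.faces τ ∧ ¬ σ ⊆ τ)

/-- `K` collapses to `L` if `L` is obtained from `K` by a finite sequence of
elementary collapses. -/
def Collapses {V : Type} (K L : Cplx V) : Prop := Relation.ReflTransGen CollapseStep K L

/-- A graph is chordal if it contains no induced cycle of length at least 4. -/
def IsChordal {V : Type} (G : SimpleGraph V) : Prop :=
  ∀ n : ℕ, 4 ≤ n → IsEmpty (cycleGraph n ↪g G)

/-- The independence number of a graph: the largest size of an independent set. -/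
noncomputable def indNum {V : Type} [Fintype V] (G : SimpleGraph V) : ℕ :=
  sSup {k : ℕ | ∃ s : Finset V, (∀ u ∈ s, ∀ v ∈ s, ¬ G.Adj u v) ∧ s.card = k}

/-- The neighborhood complex of the complement of `G - w`, regarded as a simplicial
complex on the underlying set `V(G)` (so `w` is a ghost vertex). -/
def nbdCpxDel {V : Type} (G : SimpleGraph V) (w : V) : Cplx V where
  faces σ := (w ∉ σ) ∧ ∃ v : V, v ≠ w ∧ ∀ u ∈ σ, u ≠ v ∧ ¬ G.Adj u v
  down_closed := by
    rintro σ τ hst ⟨hw, v, hv, h⟩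
    exact ⟨fun hc => hw (hst hc), v, hv, fun u hu => h u (hst hu)⟩

/-!
A chordal graph with an edge has a non-isolated simplicial vertex `v`. This is Dirac's lemma:
a minimal separator of two non-adjacent vertices `a`, `b` is a clique, since shortest paths
between two non-adjacent separator vertices through the component of `a` and through that of `b`
would close up into an induced cycle of length at least 4; one then recurses into a side.
Any neighbour `w` of `v` dominates it, `N(v) ⊆ N[w]`, i.e. `N_Ḡ(w) ⊆ N_Ḡ(v)`. Hence adding `v`
to a face of `N(Ḡ)` through `w` gives a face again; for a maximal face `τ` through `w`, the face
`τ \ {v}` is free, and removing these one at a time collapses `N(Ḡ)` onto the deletion of `w`,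
which is `N(complement of G - w)` because `v` can replace `w` as a witness. Swapping `w` for `v`
in an independent set shows `α(G - w) = α(G)`.
-/

namespace SimpleGraph

variable {V : Type} {G : SimpleGraph V}

@[simp]
lemma spanningCoe_induce_adj {s : Set V} {u v : V} :
    (G.induce s).spanningCoe.Adj u v ↔ G.Adj u v ∧ u ∈ s ∧ v ∈ s := by
  simp

lemma spanningCoe_induce_mono {s t : Set V} (h : s ⊆ t) :
    (G.induce s).spanningCoe ≤ (G.induce t).spanningCoe := fun _ _ huv => by
  rw [spanningCoe_induce_adj] at huv ⊢
  exact ⟨huv.1, h huv.2.1, h huv.2.2⟩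

lemma Reachable.mem_of_spanningCoe_induce {s : Set V} {u v : V}
    (h : (G.induce s).spanningCoe.Reachable u v) (hu : u ∈ s) : v ∈ s := by
  obtain ⟨p⟩ := h
  induction p with
  | nil => exact hu
  | cons hadj _ ih => exact ih (spanningCoe_induce_adj.mp hadj).2.2

lemma Walk.dist_getVert_of_length_eq_dist {u v : V} {p : G.Walk u v}
    (hp : p.length = G.dist u v) {i j : ℕ} (hij : i ≤ j) (hj : j ≤ p.length) :
    G.dist (p.getVert i) (p.getVert j) = j - i := by
  have hsub : ((p.drop i).take (j - i)).IsSubwalk p :=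
    (Walk.isSubwalk_take _ _).trans (Walk.isSubwalk_drop _ _)
  have h := length_eq_dist_of_subwalk hp hsub
  rw [Walk.take_length, Walk.drop_length, Walk.drop_getVert, Nat.add_sub_cancel' hij] at h
  omega

structure IsInducedPath (G : SimpleGraph V) (P : ℕ → V) (n : ℕ) : Prop where
  injOn : Set.InjOn P (Set.Iic n)
  adj_iff : ∀ ⦃i⦄, i ≤ n → ∀ ⦃j⦄, j ≤ n → (G.Adj (P i) (P j) ↔ i + 1 = j ∨ j + 1 = i)

lemma Walk.isInducedPath_getVert {u v : V} {p : G.Walk u v} (hp : p.length = G.dist u v) :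
    G.IsInducedPath p.getVert p.length where
  injOn i hi j hj hij := by
    wlog h : i ≤ j generalizing i j
    · exact (this j hj i hi hij.symm (le_of_not_ge h)).symm
    have hdist := p.dist_getVert_of_length_eq_dist hp h hj
    rw [hij, dist_self] at hdist
    omega
  adj_iff i hi j hj := by
    wlog h : i ≤ j generalizing i j
    · rw [adj_comm, this j hj i hi (le_of_not_ge h)]
      omega
    rw [← dist_eq_one_iff_adj, p.dist_getVert_of_length_eq_dist hp h hj]
    omega

namespace IsInducedPath

variable {P : ℕ → V} {n : ℕ}

lemma of_spanningCoe_induce {s : Set V} (hP : (G.induce s).spanningCoe.IsInducedPath P n)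
    (hs : ∀ i, P i ∈ s) : G.IsInducedPath P n where
  injOn := hP.injOn
  adj_iff i hi j hj := by
    rw [← hP.adj_iff hi hj, spanningCoe_induce_adj]
    simp [hs i, hs j]

lemma two_le (hP : G.IsInducedPath P n) (hne : P 0 ≠ P n) (hnadj : ¬ G.Adj (P 0) (P n)) :
    2 ≤ n := by
  match n, hne, hnadj with
  | 0, hne, _ => exact absurd rfl hne
  | 1, _, hnadj => exact absurd ((hP.adj_iff (Nat.zero_le 1) le_rfl).2 (Or.inl rfl)) hnadj
  | n + 2, _, _ => omega

lemma mem_of_mem_insert {C : Set V} (hP : G.IsInducedPath P n)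
    (hs : ∀ i ≤ n, P i ∈ insert (P 0) (insert (P n) C)) {i : ℕ} (hi : 0 < i) (hin : i < n) :
    P i ∈ C := by
  rcases hs i hin.le with h | h | h
  · exact absurd (hP.injOn (Set.mem_Iic.2 hin.le) (Set.mem_Iic.2 (Nat.zero_le n)) h) hi.ne'
  · exact absurd (hP.injOn (Set.mem_Iic.2 hin.le) (Set.mem_Iic.2 le_rfl) h) hin.ne
  · exact h

lemma ne_and_adj_iff {i j : ℕ} (hP : G.IsInducedPath P n) (hij : i < j) (hj : j ≤ n) :
    P i ≠ P j ∧ (G.Adj (P i) (P j) ↔ j = i + 1) :=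
  ⟨fun h => hij.ne (hP.injOn (Set.mem_Iic.2 (hij.le.trans hj)) hj h),
    by rw [hP.adj_iff (hij.le.trans hj) hj]; omega⟩

end IsInducedPath

lemma Reachable.exists_isInducedPath {s : Set V} {x y : V}
    (h : (G.induce s).spanningCoe.Reachable x y) (hx : x ∈ s) :
    ∃ (n : ℕ) (P : ℕ → V), G.IsInducedPath P n ∧ P 0 = x ∧ P n = y ∧ ∀ i, P i ∈ s := by
  obtain ⟨p, hp⟩ := h.exists_walk_length_eq_dist
  have hs : ∀ i, p.getVert i ∈ s := fun i => Reachable.mem_of_spanningCoe_induce ⟨p.take i⟩ hx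
  exact ⟨p.length, p.getVert, (Walk.isInducedPath_getVert hp).of_spanningCoe_induce hs,
    p.getVert_zero, p.getVert_length, hs⟩

lemma cycleGraph_adj_iff_of_lt {n : ℕ} {i j : Fin n} (hij : i < j) :
    (cycleGraph n).Adj i j ↔ (j : ℕ) = i + 1 ∨ ((i : ℕ) = 0 ∧ (j : ℕ) + 1 = n) := by
  obtain ⟨i, hi⟩ := i
  obtain ⟨j, hj⟩ := j
  rw [Fin.mk_lt_mk] at hij
  rw [cycleGraph_adj', Fin.val_sub, Fin.val_sub]
  simp only
  rw [Nat.mod_eq_of_lt (by omega : n - j + i < n), Nat.mod_eq_sub_mod (by omega : n ≤ n - i + j),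
    Nat.mod_eq_of_lt (by omega : n - i + j - n < n)]
  omega

lemma nonempty_cycleGraph_embedding {f : ℕ → V} {n : ℕ}
    (hf : ∀ i j, i < j → j < n →
      f i ≠ f j ∧ (G.Adj (f i) (f j) ↔ j = i + 1 ∨ (i = 0 ∧ j + 1 = n))) :
    Nonempty (cycleGraph n ↪g G) := by
  refine ⟨⟨⟨fun k => f k, fun k l hkl => ?_⟩, fun {k l} => ?_⟩⟩
  · rcases lt_trichotomy k l with h | h | h
    · exact absurd hkl (hf k l h l.isLt).1
    · exact h
    · exact absurd hkl.symm (hf l k h k.isLt).1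
  · rcases lt_trichotomy k l with h | rfl | h
    · rw [cycleGraph_adj_iff_of_lt h]
      exact (hf k l h l.isLt).2
    · simp
    · rw [adj_comm, (cycleGraph _).adj_comm, cycleGraph_adj_iff_of_lt h]
      exact (hf l k h k.isLt).2

def joinPaths (P Q : ℕ → V) (a : ℕ) (k : ℕ) : V := if k < a then P k else Q (k - a)

lemma IsInducedPath.joinPaths_ne_and_adj_iff {P Q : ℕ → V} {a b i j : ℕ}
    (hP : G.IsInducedPath P a) (hQ : G.IsInducedPath Q b) (ha : 2 ≤ a) (hb : 2 ≤ b)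
    (hstart : P 0 = Q b) (hend : P a = Q 0)
    (hPQ : ∀ i, 0 < i → i < a → ∀ j, 0 < j → j < b → P i ≠ Q j ∧ ¬ G.Adj (P i) (Q j))
    (hij : i < j) (hj : j < a + b) :
    joinPaths P Q a i ≠ joinPaths P Q a j ∧
      (G.Adj (joinPaths P Q a i) (joinPaths P Q a j) ↔ j = i + 1 ∨ (i = 0 ∧ j + 1 = a + b)) := by
  unfold joinPaths
  rcases lt_or_ge j a with hja | hja
  · rw [if_pos hja, if_pos (hij.trans hja)]
    obtain ⟨hne, hadj⟩ := hP.ne_and_adj_iff hij hja.le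
    exact ⟨hne, hadj.trans (by omega)⟩
  rcases lt_or_ge i a with hia | hia
  · rw [if_pos hia, if_neg (not_lt.2 hja)]
    rcases Nat.eq_zero_or_pos i with rfl | hi0
    · obtain ⟨hne, hadj⟩ := hQ.ne_and_adj_iff (i := j - a) (j := b) (by omega) le_rfl
      rw [hstart]
      exact ⟨hne.symm, (G.adj_comm _ _).trans (hadj.trans (by omega))⟩
    rcases hja.eq_or_lt with rfl | hja
    · obtain ⟨hne, hadj⟩ := hP.ne_and_adj_iff hia le_rfl
      rw [Nat.sub_self, ← hend]
      exact ⟨hne, hadj.trans (by omega)⟩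
    obtain ⟨hne, hnadj⟩ := hPQ i hi0 hia (j - a) (by omega) (by omega)
    exact ⟨hne, iff_of_false hnadj (by omega)⟩
  · rw [if_neg (not_lt.2 hia), if_neg (not_lt.2 hja)]
    obtain ⟨hne, hadj⟩ := hQ.ne_and_adj_iff (i := i - a) (j := j - a) (by omega) (by omega)
    exact ⟨hne, hadj.trans (by omega)⟩

theorem IsChordal.adj_of_reachable_through {A B : Set V} (hG : IsChordal G)
    (hAB : Disjoint A B) (hnadj : ∀ a ∈ A, ∀ b ∈ B, ¬ G.Adj a b) {x y : V} (hxy : x ≠ y)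
    (hA : (G.induce (insert x (insert y A))).spanningCoe.Reachable x y)
    (hB : (G.induce (insert x (insert y B))).spanningCoe.Reachable y x) : G.Adj x y := by
  by_contra hxy'
  obtain ⟨a, P, hP, hP0, hPa, hPs⟩ := hA.exists_isInducedPath (by simp)
  obtain ⟨b, Q, hQ, hQ0, hQb, hQs⟩ := hB.exists_isInducedPath (by simp)
  subst hP0 hPa
  have ha := hP.two_le hxy hxy'
  have hb := hQ.two_le (by rw [hQ0, hQb]; exact hxy.symm) (by rw [hQ0, hQb, adj_comm]; exact hxy')
  have hPA : ∀ i, 0 < i → i < a → P i ∈ A := fun i =>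
    hP.mem_of_mem_insert (fun i _ => hPs i)
  have hQB : ∀ j, 0 < j → j < b → Q j ∈ B := fun j =>
    hQ.mem_of_mem_insert (fun j _ => by rw [hQ0, hQb, Set.insert_comm]; exact hQs j)
  obtain ⟨e⟩ := nonempty_cycleGraph_embedding fun i j hij hj =>
    hP.joinPaths_ne_and_adj_iff hQ ha hb hQb.symm hQ0.symm (fun i hi0 hia j hj0 hjb =>
      ⟨hAB.ne_of_mem (hPA i hi0 hia) (hQB j hj0 hjb), hnadj _ (hPA i hi0 hia) _ (hQB j hj0 hjb)⟩)
      hij hj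
  exact (hG (a + b) (by omega)).false e

def componentIn (G : SimpleGraph V) (T : Set V) (a : V) : Set V :=
  {z | (G.induce T).spanningCoe.Reachable a z}

section componentIn

variable {T : Set V} {a b c z : V}

lemma mem_componentIn_self : a ∈ G.componentIn T a := Reachable.refl a

lemma componentIn_subset (ha : a ∈ T) : G.componentIn T a ⊆ T := fun _ hz =>
  Reachable.mem_of_spanningCoe_induce hz ha

lemma mem_componentIn_of_adj (ha : a ∈ T) (hz : z ∈ G.componentIn T a) (hzc : G.Adj z c)
    (hc : c ∈ T) :
    c ∈ G.componentIn T a :=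
  Reachable.trans hz (spanningCoe_induce_adj.2 ⟨hzc, componentIn_subset ha hz, hc⟩).reachable

lemma reachable_induce_componentIn (hz : z ∈ G.componentIn T a) :
    (G.induce (G.componentIn T a)).spanningCoe.Reachable a z := by
  obtain ⟨p⟩ := hz
  suffices ∀ u (p : (G.induce T).spanningCoe.Walk u z), u ∈ G.componentIn T a →
      (G.induce (G.componentIn T a)).spanningCoe.Reachable u z from this a p mem_componentIn_self
  clear p
  intro u p
  induction p with
  | nil => exact fun _ => Reachable.refl _
  | cons hadj _ ih =>
    intro hu
    have hv := Reachable.trans hu hadj.reachable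
    have hadj' := spanningCoe_induce_adj.2 ⟨(spanningCoe_induce_adj.1 hadj).1, hu, hv⟩
    exact Reachable.trans hadj'.reachable (ih hv)

lemma reachable_insert_insert_of_adj {x y c₁ c₂ : V} (hc₁ : c₁ ∈ G.componentIn T a)
    (hc₂ : c₂ ∈ G.componentIn T a) (hx : G.Adj x c₁) (hy : G.Adj c₂ y) :
    (G.induce (insert x (insert y (G.componentIn T a)))).spanningCoe.Reachable x y := by
  have hle := spanningCoe_induce_mono (G := G)
    ((Set.subset_insert y _).trans (Set.subset_insert x _) : G.componentIn T a ⊆ _)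
  refine Reachable.trans (spanningCoe_induce_adj.2 ⟨hx, by simp, by simp [hc₁]⟩).reachable
    (Reachable.trans ?_ (spanningCoe_induce_adj.2 ⟨hy, by simp [hc₂], by simp⟩).reachable)
  exact ((reachable_induce_componentIn hc₁).symm.trans (reachable_induce_componentIn hc₂)).mono hle

lemma disjoint_componentIn (h : ¬ (G.induce T).spanningCoe.Reachable a b) :
    Disjoint (G.componentIn T a) (G.componentIn T b) :=
  Set.disjoint_left.2 fun _ ha hb => h (Reachable.trans ha (Reachable.symm hb))

lemma not_adj_of_mem_componentIn (ha : a ∈ T) (hb : b ∈ T)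
    (h : ¬ (G.induce T).spanningCoe.Reachable a b) :
    ∀ z ∈ G.componentIn T a, ∀ z' ∈ G.componentIn T b, ¬ G.Adj z z' := fun _ hz _ hz' hadj =>
  h <| Reachable.trans (mem_componentIn_of_adj ha hz hadj (componentIn_subset hb hz'))
    (Reachable.symm hz')

lemma exists_adj_of_reachable_insert {s : V} (ha : a ∈ T)
    (hsep : ¬ (G.induce T).spanningCoe.Reachable a b)
    (h : (G.induce (insert s T)).spanningCoe.Reachable a b) :
    ∃ c ∈ G.componentIn T a, G.Adj c s := by
  obtain ⟨p⟩ := h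
  obtain ⟨⟨⟨u, v⟩, huv⟩, -, hu, hv⟩ := p.exists_boundary_dart _ mem_componentIn_self hsep
  obtain ⟨hadj, -, rfl | hT⟩ := spanningCoe_induce_adj.mp huv
  · exact ⟨u, hu, hadj⟩
  · exact absurd (mem_componentIn_of_adj ha hu hadj hT) hv

end componentIn

lemma not_reachable_of_subset_pair {T : Set V} {a b : V} (hT : T ⊆ {a, b}) (hab : a ≠ b)
    (hnadj : ¬ G.Adj a b) : ¬ (G.induce T).spanningCoe.Reachable a b := by
  rintro ⟨p⟩
  obtain ⟨d, -, hd₁, hd₂⟩ := p.exists_boundary_dart {a} rfl hab.symm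
  obtain ⟨hadj, -, hdT⟩ := spanningCoe_induce_adj.mp d.adj
  rw [Set.mem_singleton_iff] at hd₁ hd₂
  rcases hT hdT with h | h
  · exact hd₂ h
  · rw [hd₁, h] at hadj
    exact hnadj hadj

/-- Dirac: minimal separators of a chordal graph are cliques. -/
theorem IsChordal.isClique_of_forall_reachable_insert (hG : IsChordal G) {S T : Set V} {a b : V}
    (ha : a ∈ T) (hb : b ∈ T) (hsep : ¬ (G.induce T).spanningCoe.Reachable a b)
    (hS : ∀ s ∈ S, (G.induce (insert s T)).spanningCoe.Reachable a b) : G.IsClique S := by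
  have hsep' : ¬ (G.induce T).spanningCoe.Reachable b a := fun h => hsep h.symm
  intro x hx y hy hxy
  obtain ⟨xa, hxa, hxa'⟩ := exists_adj_of_reachable_insert ha hsep (hS x hx)
  obtain ⟨ya, hya, hya'⟩ := exists_adj_of_reachable_insert ha hsep (hS y hy)
  obtain ⟨xb, hxb, hxb'⟩ := exists_adj_of_reachable_insert hb hsep' (hS x hx).symm
  obtain ⟨yb, hyb, hyb'⟩ := exists_adj_of_reachable_insert hb hsep' (hS y hy).symm
  exact hG.adj_of_reachable_through (disjoint_componentIn hsep)
    (not_adj_of_mem_componentIn ha hb hsep) hxy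
    (reachable_insert_insert_of_adj hxa hya hxa'.symm hya')
    (reachable_insert_insert_of_adj hxb hyb hxb'.symm hyb').symm

lemma neighborSet_inter_subset_of_mem_componentIn {W S : Set V} {c x : V} (hc : c ∈ W \ S)
    (hx : x ∈ G.componentIn (W \ S) c) :
    G.neighborSet x ∩ W ⊆ G.neighborSet x ∩ (S ∪ G.componentIn (W \ S) c) := by
  rintro z ⟨hxz, hzW⟩
  refine ⟨hxz, ?_⟩
  by_cases hzS : z ∈ S
  · exact Or.inl hzS
  · exact Or.inr (mem_componentIn_of_adj hc hx hxz ⟨hzW, hzS⟩)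

/-- Dirac's simplicial vertex lemma, for the subgraph induced on `W`. -/
theorem IsChordal.exists_isClique_neighborSet_inter [Finite V] (hG : IsChordal G)
    {W K : Set V} (hK : G.IsClique K) (hWK : ¬ W ⊆ K) :
    ∃ x ∈ W, x ∉ K ∧ G.IsClique (G.neighborSet x ∩ W) := by
  induction hn : W.ncard using Nat.strong_induction_on generalizing W K with
  | _ n ih =>
  by_cases hW : G.IsClique W
  · obtain ⟨x, hxW, hxK⟩ := Set.not_subset.1 hWK
    exact ⟨x, hxW, hxK, hW.subset Set.inter_subset_right⟩
  obtain ⟨a, ha, b, hb, hab, hnadj⟩ : ∃ a ∈ W, ∃ b ∈ W, a ≠ b ∧ ¬ G.Adj a b := by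
    simpa [IsClique, Set.Pairwise] using hW
  obtain ⟨S, hSab, hSmin⟩ := exists_minimal_le_of_wellFoundedLT
    (fun S => ¬ (G.induce (W \ S)).spanningCoe.Reachable a b) (W \ {a, b})
    (not_reachable_of_subset_pair (by simp) hab hnadj)
  have haT : a ∈ W \ S := ⟨ha, fun h => (hSab h).2 (by simp)⟩
  have hbT : b ∈ W \ S := ⟨hb, fun h => (hSab h).2 (by simp)⟩
  have hS : G.IsClique S := hG.isClique_of_forall_reachable_insert haT hbT hSmin.prop
    fun s hs => (not_not.1 (hSmin.not_prop_of_lt (Set.sdiff_singleton_ssubset.2 hs))).mono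
      (spanningCoe_induce_mono fun z (⟨hzW, hz⟩ : z ∈ W \ (S \ {s})) => by
        by_cases hzs : z = s
        · exact Or.inl hzs
        · exact Or.inr ⟨hzW, fun hzS => hz ⟨hzS, hzs⟩⟩)
  have side : ∀ c d, c ∈ W \ S → d ∈ W \ S → ¬ (G.induce (W \ S)).spanningCoe.Reachable c d →
      Disjoint K (G.componentIn (W \ S) c) → ∃ x ∈ W, x ∉ K ∧ G.IsClique (G.neighborSet x ∩ W) := by
    intro c d hc hd hcd hKc
    have hsub : S ∪ G.componentIn (W \ S) c ⊆ W :=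
      Set.union_subset (fun s hs => (hSab hs).1) ((componentIn_subset hc).trans Set.sdiff_subset)
    have hlt : (S ∪ G.componentIn (W \ S) c).ncard < n := hn ▸ Set.ncard_lt_ncard
      (hsub.ssubset_of_not_subset fun h => (h hd.1).elim (hd.2 ·) hcd) (Set.toFinite _)
    obtain ⟨x, hxW, hxS, hx⟩ := ih _ hlt hS (fun h => hc.2 (h (Or.inr mem_componentIn_self))) rfl
    have hxc : x ∈ G.componentIn (W \ S) c := hxW.resolve_left hxS
    exact ⟨x, hsub hxW, hKc.notMem_of_mem_right hxc,
      hx.subset (neighborSet_inter_subset_of_mem_componentIn hc hxc)⟩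
  by_cases hKa : Disjoint K (G.componentIn (W \ S) a)
  · exact side a b haT hbT hSmin.prop hKa
  refine side b a hbT haT (fun h => hSmin.prop h.symm) (Set.disjoint_left.2 fun k hk hkb => ?_)
  obtain ⟨k', hk', hka⟩ := Set.not_disjoint_iff.1 hKa
  have hne : k' ≠ k := (disjoint_componentIn hSmin.prop).ne_of_mem hka hkb
  exact not_adj_of_mem_componentIn haT hbT hSmin.prop k' hka k hkb (hK hk' hk hne)

theorem IsChordal.exists_dominated_pair [Finite V] (hG : IsChordal G)
    (he : G.edgeSet.Nonempty) : ∃ v w, G.Adj v w ∧ ∀ x, G.Adj x v → x = w ∨ G.Adj x w := by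
  obtain ⟨e, he⟩ := he
  induction e using Sym2.ind with
  | _ u u' =>
  obtain ⟨v, hv, -, hcl⟩ := hG.exists_isClique_neighborSet_inter (W := G.support)
    isClique_empty (fun h => h ⟨u', he⟩)
  obtain ⟨w, hvw⟩ := hv
  refine ⟨v, w, hvw, fun x hxv => ?_⟩
  by_cases hxw : x = w
  · exact Or.inl hxw
  · exact Or.inr (hcl ⟨hxv.symm, G.mem_support.2 ⟨v, hxv⟩⟩ ⟨hvw, G.mem_support.2 ⟨v, hvw.symm⟩⟩ hxw)

lemma compl_neighborSet_subset {v w : V} (hvw : G.Adj v w)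
    (hdom : ∀ x, G.Adj x v → x = w ∨ G.Adj x w) :
    Gᶜ.neighborSet w ⊆ Gᶜ.neighborSet v := by
  intro u hu
  simp only [mem_neighborSet, compl_adj] at hu ⊢
  refine ⟨fun hvu => hu.2 (hvu ▸ hvw.symm), fun hvu => ?_⟩
  rcases hdom u hvu.symm with rfl | huw
  · exact hu.1 rfl
  · exact hu.2 huw.symm

lemma indNum_eq_indepNum [Fintype V] (G : SimpleGraph V) : indNum G = G.indepNum := by
  unfold indNum indepNum
  congr 1
  ext k
  simp only [Set.mem_ofPred_eq, isNIndepSet_iff, IsIndepSet, Set.Pairwise, Finset.mem_coe]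
  exact exists_congr fun s => and_congr_left' ⟨fun h u hu v hv _ => h u hu v hv,
    fun h u hu v hv huv => (eq_or_ne u v).elim (fun e hadj => G.irrefl (e ▸ hadj)) (h hu hv) huv⟩

lemma indepNum_induce_le [Finite V] (s : Set V) : (G.induce s).indepNum ≤ G.indepNum := by
  obtain ⟨t, ht⟩ := exists_isNIndepSet_indepNum (G := G.induce s)
  rw [← ht.card_eq, ← Finset.card_map (Function.Embedding.subtype _)]
  refine IsIndepSet.card_le_indepNum ?_
  rintro _ hx _ hy hxy
  simp only [Finset.coe_map, Set.mem_image, Finset.mem_coe, Function.Embedding.coe_subtype] at hx hy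
  obtain ⟨x, hx, rfl⟩ := hx
  obtain ⟨y, hy, rfl⟩ := hy
  exact ht.isIndepSet hx hy (fun h => hxy (congrArg Subtype.val h))

lemma card_le_indepNum_induce [Finite V] {s : Set V} {t : Finset V} (ht : G.IsIndepSet t)
    (hts : ↑t ⊆ s) : t.card ≤ (G.induce s).indepNum := by
  classical
  have hcard : (t.subtype (· ∈ s)).card = t.card := by
    rw [Finset.card_subtype, Finset.filter_true_of_mem fun x hx => hts hx]
  rw [← hcard]
  refine IsIndepSet.card_le_indepNum fun x hx y hy hxy => ?_
  exact ht (Finset.mem_subtype.1 hx) (Finset.mem_subtype.1 hy) (fun h => hxy (Subtype.ext h))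

lemma exists_isIndepSet_notMem_card_eq [DecidableEq V] {v w : V} (hvw : G.Adj v w)
    (hdom : ∀ x, G.Adj x v → x = w ∨ G.Adj x w) {t : Finset V} (ht : G.IsIndepSet t) :
    ∃ t' : Finset V, G.IsIndepSet t' ∧ w ∉ t' ∧ t'.card = t.card := by
  by_cases hw : w ∈ t
  swap
  · exact ⟨t, ht, hw, rfl⟩
  have hvt : v ∉ t.erase w := fun hv => ht (Finset.mem_of_mem_erase hv) hw hvw.ne hvw
  have hv : ∀ x ∈ t.erase w, ¬ G.Adj v x := fun x hx hvx => by
    rcases hdom x hvx.symm with rfl | hxw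
    · exact Finset.notMem_erase x t hx
    · exact ht (Finset.mem_of_mem_erase hx) hw (Finset.ne_of_mem_erase hx) hxw
  refine ⟨insert v (t.erase w), ?_, ?_, ?_⟩
  · rw [Finset.coe_insert, IsIndepSet, Set.pairwise_insert]
    exact ⟨ht.mono (Finset.coe_subset.2 (Finset.erase_subset w t)),
      fun x hx _ => ⟨hv x hx, fun hxv => hv x hx hxv.symm⟩⟩
  · simp [hvw.ne.symm]
  · rw [Finset.card_insert_of_notMem hvt, Finset.card_erase_add_one hw]

lemma indepNum_induce_ne_eq [Finite V] [DecidableEq V] {v w : V} (hvw : G.Adj v w)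
    (hdom : ∀ x, G.Adj x v → x = w ∨ G.Adj x w) :
    (G.induce {u | u ≠ w}).indepNum = G.indepNum := by
  refine le_antisymm (indepNum_induce_le _) ?_
  obtain ⟨t, ht⟩ := exists_isNIndepSet_indepNum (G := G)
  obtain ⟨t', ht', hw, hcard⟩ := exists_isIndepSet_notMem_card_eq hvw hdom ht.isIndepSet
  rw [← ht.card_eq, ← hcard]
  exact card_le_indepNum_induce ht' fun x hx => ne_of_mem_of_not_mem hx hw

end SimpleGraph

attribute [ext] Cplx

namespace Cplx

variable {V : Type} {K : Cplx V}

/-- `K` with the open star of `σ` removed. -/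
def removeStar (K : Cplx V) (σ : Finset V) : Cplx V where
  faces τ := K.faces τ ∧ ¬ σ ⊆ τ
  down_closed _ _ hst h := ⟨K.down_closed hst h.1, fun hσ => h.2 (hσ.trans hst)⟩

lemma removeStar_eq_self {σ : Finset V} (h : ∀ τ, K.faces τ → ¬ σ ⊆ τ) : K.removeStar σ = K :=
  Cplx.ext (funext fun τ => propext ⟨And.left, fun hτ => ⟨hτ, h τ hτ⟩⟩)

lemma collapseStep_removeStar {σ : Finset V} (h : K.IsFreeFace σ) :
    CollapseStep K (K.removeStar σ) :=
  ⟨σ, h, fun _ => Iff.rfl⟩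

variable [DecidableEq V]

lemma isFreeFace_erase {τ : Finset V} {v : V} (hτ : K.IsFacet τ) (hv : v ∈ τ)
    (hne : (τ.erase v).Nonempty) (hcone : ∀ ρ, K.faces ρ → τ.erase v ⊆ ρ → K.faces (insert v ρ)) :
    K.IsFreeFace (τ.erase v) := by
  refine ⟨hne, K.down_closed (Finset.erase_subset v τ) hτ.1, fun hfacet => ?_,
    ⟨τ, ⟨hτ, Finset.erase_subset v τ⟩, fun ρ ⟨hρ, hsub⟩ => ?_⟩⟩
  · have := hfacet.2 hτ.1 (Finset.erase_subset v τ)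
    exact Finset.notMem_erase v τ (by rw [this]; exact hv)
  · have hvρ : v ∈ ρ := by
      rw [hρ.2 (hcone ρ hρ.1 hsub) (Finset.subset_insert v ρ)]
      exact Finset.mem_insert_self v ρ
    refine (hτ.2 hρ.1 ?_).symm
    rw [← Finset.insert_erase hv]
    exact Finset.insert_subset hvρ hsub

theorem collapses_removeStar_singleton [Finite V] {v w : V} (hvw : v ≠ w)
    (hcone : ∀ σ, K.faces σ → w ∈ σ → K.faces (insert v σ)) : Collapses K (K.removeStar {w}) := by
  induction hn : {σ | K.faces σ ∧ w ∈ σ}.ncard using Nat.strong_induction_on generalizing K with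
  | _ n ih =>
  by_cases hw : ∃ σ, K.faces σ ∧ w ∈ σ
  swap
  · simp only [not_exists, not_and] at hw
    rw [removeStar_eq_self fun τ hτ => by simpa using hw τ hτ]
    exact Relation.ReflTransGen.refl
  obtain ⟨σ, hσ⟩ := hw
  obtain ⟨τ, -, hτ⟩ := exists_maximal_ge_of_wellFoundedGT (fun σ => K.faces σ ∧ w ∈ σ) σ hσ
  have hfacet : K.IsFacet τ :=
    ⟨hτ.prop.1, fun ρ hρ hsub => le_antisymm hsub (hτ.le_of_ge ⟨hρ, hsub hτ.prop.2⟩ hsub)⟩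
  have hvτ : v ∈ τ := hτ.le_of_ge ⟨hcone τ hτ.prop.1 hτ.prop.2, Finset.mem_insert_of_mem hτ.prop.2⟩
    (Finset.subset_insert v τ) (Finset.mem_insert_self v τ)
  have hwσ : w ∈ τ.erase v := Finset.mem_erase.2 ⟨hvw.symm, hτ.prop.2⟩
  have hfree := isFreeFace_erase hfacet hvτ ⟨w, hwσ⟩ fun ρ hρ hsub => hcone ρ hρ (hsub hwσ)
  set K' := K.removeStar (τ.erase v)
  have hK' : K'.removeStar {w} = K.removeStar {w} := by
    ext ρ
    simp only [removeStar, K', Finset.singleton_subset_iff]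
    exact ⟨fun h => ⟨h.1.1, h.2⟩, fun h => ⟨⟨h.1, fun hsub => h.2 (hsub hwσ)⟩, h.2⟩⟩
  have hcone' : ∀ σ, K'.faces σ → w ∈ σ → K'.faces (insert v σ) := fun σ hσ hw =>
    ⟨hcone σ hσ.1 hw, fun hsub => hσ.2 fun z hz =>
      (Finset.mem_insert.1 (hsub hz)).resolve_left (Finset.ne_of_mem_erase hz)⟩
  have hlt : {σ | K'.faces σ ∧ w ∈ σ}.ncard < n := hn ▸ Set.ncard_lt_ncard
    ⟨fun ρ hρ => ⟨hρ.1.1, hρ.2⟩, fun hsub => (hsub ⟨hfree.2.1, hwσ⟩).1.2 subset_rfl⟩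
    (Set.toFinite _)
  exact .head (collapseStep_removeStar hfree) (hK' ▸ ih _ hlt hcone' rfl)

end Cplx

section NeighborhoodComplex

variable {V : Type} {G : SimpleGraph V} {v w : V}

lemma nbdCpx_faces_insert [DecidableEq V] {H : SimpleGraph V}
    (hsub : H.neighborSet w ⊆ H.neighborSet v) {σ : Finset V} (hσ : (nbdCpx H).faces σ)
    (hw : w ∈ σ) : (nbdCpx H).faces (insert v σ) := by
  obtain ⟨u, hu⟩ := hσ
  refine ⟨u, fun t ht => ?_⟩
  rcases Finset.mem_insert.1 ht with rfl | ht
  · exact (hsub (hu w hw).symm).symm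
  · exact hu t ht

lemma nbdCpxDel_eq_removeStar (hsub : Gᶜ.neighborSet w ⊆ Gᶜ.neighborSet v) (hvw : v ≠ w) :
    nbdCpxDel G w = (nbdCpx Gᶜ).removeStar {w} := by
  ext σ
  simp only [nbdCpxDel, nbdCpx, Cplx.removeStar, Finset.singleton_subset_iff]
  constructor
  · rintro ⟨hw, u, -, hu⟩
    exact ⟨⟨u, fun t ht => by simpa [ne_comm, adj_comm] using hu t ht⟩, hw⟩
  · rintro ⟨⟨u, hu⟩, hw⟩
    have hu' : ∃ u', u' ≠ w ∧ ∀ t ∈ σ, Gᶜ.Adj u' t := by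
      by_cases huw : u = w
      · exact ⟨v, hvw, fun t ht => hsub (huw ▸ hu t ht)⟩
      · exact ⟨u, huw, hu⟩
    obtain ⟨u', hu'w, hu'⟩ := hu'
    exact ⟨hw, u', hu'w, fun t ht => by simpa [ne_comm, adj_comm] using hu' t ht⟩

end NeighborhoodComplex

/-- Lemma 4.8: for a chordal graph `G` with at least one edge, there is a non-isolated
vertex `w` such that `N(Ḡ)` collapses to `N(complement of G - w)` and
`α(G) = α(G - w)`. -/
theorem chordal_collapse_step {V : Type} [Fintype V] [DecidableEq V]
    (G : SimpleGraph V) (hch : IsChordal G) (he : G.edgeSet.Nonempty) :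
    ∃ w : V, (∃ u : V, G.Adj w u) ∧
      Collapses (nbdCpx Gᶜ) (nbdCpxDel G w) ∧
      indNum G = indNum (G.induce {u : V | u ≠ w}) := by
  obtain ⟨v, w, hvw, hdom⟩ := hch.exists_dominated_pair he
  have hsub := compl_neighborSet_subset hvw hdom
  refine ⟨w, ⟨v, hvw.symm⟩, ?_, ?_⟩
  · rw [nbdCpxDel_eq_removeStar hsub hvw.ne]
    exact Cplx.collapses_removeStar_singleton hvw.ne fun σ => nbdCpx_faces_insert hsub
  · rw [indNum_eq_indepNum, indNum_eq_indepNum, indepNum_induce_ne_eq hvw hdom]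
end

section
/- Let k and n be non-negative integers with k ≤ n, and let ∂Δ(n,k) be the simplicial complex with underlying set {0,1,…,n} whose faces are exactly the proper subsets of {0,1,…,k}. Then the combinatorial Alexander dual (∂Δ(n,k))^∨ is homotopy equivalent to the sphere S^{n−k−1}. -/
open SimpleGraph

/-- The combinatorial Alexander dual of a simplicial complex: the faces are the
subsets whose complement is a non-face. -/
def Cplx.dual {V : Type} [Fintype V] [DecidableEq V] (K : Cplx V) : Cplx V where
  faces σ := ¬ K.faces σᶜ
  down_closed := by
    intro σ τ hst h hc
    exact h (K.down_closed (Finset.compl_subset_compl.2 hst) hc)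

open Classical in
/-- The geometric realization of a simplicial complex, as a subspace of `V → ℝ`. -/
def Cplx.space {V : Type} [Fintype V] (K : Cplx V) : Type :=
  {f : V → ℝ // (∑ v, f v = 1) ∧ (∀ v, 0 ≤ f v) ∧
    K.faces (Finset.univ.filter fun v => f v ≠ 0)}

instance {V : Type} [Fintype V] (K : Cplx V) : TopologicalSpace K.space :=
  instTopologicalSpaceSubtype

/-- The simplicial complex `∂Δ(n,k)` on the underlying set `{0, 1, …, n}` whose faces
are exactly the proper subsets of `{0, 1, …, k}`. -/
def bdSimplex (n k : ℕ) : Cplx (Fin (n + 1)) where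
  faces σ := σ ⊂ Finset.univ.filter (fun i : Fin (n + 1) => (i : ℕ) ≤ k)
  down_closed := by
    intro σ τ hst h
    exact Finset.ssubset_of_subset_of_ssubset hst h

/-!
A point of the realization of the dual of `∂Δ_A` is a probability vector that vanishes at
some vertex outside `A` or vanishes on all of `A`. Pushing the mass on `A` to one vertex
`a ∈ A` along straight lines deforms this space onto the boundary of the simplex spanned by
`a` and the complement `B` of `A`. Forgetting the `a`-coordinate identifies that boundary
with the frontier of the corner simplex `{x ∈ ℝ^B | 0 ≤ x, ∑ x ≤ 1}`, a bounded convex body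
with nonempty interior, whose frontier is therefore homeomorphic to the unit sphere.
-/

open Metric

noncomputable section CornerSimplex

variable {ι : Type} [Fintype ι]

variable (ι) in
def cornerSimplex : Set (EuclideanSpace ℝ ι) :=
  {x | (∀ i, 0 ≤ x i) ∧ ∑ i, x i ≤ 1}

def EuclideanSpace.sumCoords : StrongDual ℝ (EuclideanSpace ℝ ι) := ∑ i, EuclideanSpace.proj i

@[simp] lemma EuclideanSpace.sumCoords_apply (x : EuclideanSpace ℝ ι) :
    EuclideanSpace.sumCoords x = ∑ i, x i := by
  simp [EuclideanSpace.sumCoords]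

lemma convex_cornerSimplex : Convex ℝ (cornerSimplex ι) := by
  have h := (convex_iInter fun i =>
    convex_halfSpace_ge (EuclideanSpace.proj (𝕜 := ℝ) i).isLinear 0).inter
      (convex_halfSpace_le (EuclideanSpace.sumCoords (ι := ι)).isLinear 1)
  simpa [cornerSimplex, Set.ofPred_and, Set.ofPred_forall] using h

lemma isClosed_cornerSimplex : IsClosed (cornerSimplex ι) := by
  simp only [cornerSimplex, Set.ofPred_and, Set.ofPred_forall]
  exact (isClosed_iInter fun i => isClosed_le continuous_const (by fun_prop)).inter
    (isClosed_le (by fun_prop) continuous_const)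

lemma cornerSimplex_subset_closedBall : cornerSimplex ι ⊆ closedBall 0 1 := by
  intro x ⟨hx0, hx1⟩
  have hle : ∀ i, x i ≤ 1 := fun i =>
    (Finset.single_le_sum (fun j _ => hx0 j) (Finset.mem_univ i)).trans hx1
  rw [mem_closedBall_zero_iff, EuclideanSpace.norm_eq, Real.sqrt_le_one]
  calc ∑ i, ‖x i‖ ^ 2 ≤ ∑ i, x i := Finset.sum_le_sum fun i _ => by
        rw [Real.norm_eq_abs, sq_abs]; nlinarith [hx0 i, hle i]
    _ ≤ 1 := hx1

lemma isBounded_cornerSimplex : Bornology.IsBounded (cornerSimplex ι) :=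
  isBounded_closedBall.subset cornerSimplex_subset_closedBall

lemma interior_cornerSimplex :
    interior (cornerSimplex ι) = {x | (∀ i, 0 < x i) ∧ ∑ i, x i < 1} := by
  classical
  apply subset_antisymm
  · intro x hx
    refine ⟨fun i => ?_, ?_⟩
    · have : interior (cornerSimplex ι) ⊆ EuclideanSpace.proj i ⁻¹' interior (Set.Ici 0) := by
        rw [← ContinuousLinearMap.interior_preimage]
        · exact interior_mono fun y hy => hy.1 i
        · exact fun c => ⟨EuclideanSpace.single i c, by simp⟩
      simpa using this hx
    · rcases isEmpty_or_nonempty ι with _ | ⟨⟨i⟩⟩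
      · simp
      have : interior (cornerSimplex ι) ⊆ EuclideanSpace.sumCoords ⁻¹' interior (Set.Iic 1) := by
        rw [← ContinuousLinearMap.interior_preimage]
        · exact interior_mono fun y hy => by simpa using hy.2
        · exact fun c => ⟨EuclideanSpace.single i c, by simp⟩
      simpa using this hx
  · refine interior_maximal (fun y hy => ⟨fun i => (hy.1 i).le, hy.2.le⟩) ?_
    simp only [Set.ofPred_and, Set.ofPred_forall]
    exact (isOpen_iInter_of_finite fun i => isOpen_lt continuous_const (by fun_prop)).inter
      (isOpen_lt (by fun_prop) continuous_const)

lemma mem_frontier_cornerSimplex {x : EuclideanSpace ℝ ι} :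
    x ∈ frontier (cornerSimplex ι) ↔ x ∈ cornerSimplex ι ∧ (∑ i, x i = 1 ∨ ∃ i, x i = 0) := by
  rw [isClosed_cornerSimplex.frontier_eq, interior_cornerSimplex, Set.mem_sdiff,
    and_congr_right_iff]
  rintro ⟨hx0, hx1⟩
  simp only [Set.mem_ofPred_eq, not_and_or, not_forall, not_lt]
  constructor
  · rintro (⟨i, hi⟩ | hs)
    exacts [Or.inr ⟨i, hi.antisymm (hx0 i)⟩, Or.inl (hx1.antisymm hs)]
  · rintro (hs | ⟨i, hi⟩)
    exacts [Or.inr hs.ge, Or.inl ⟨i, hi.le⟩]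

lemma nonempty_interior_cornerSimplex : (interior (cornerSimplex ι)).Nonempty := by
  rw [interior_cornerSimplex]
  refine ⟨WithLp.toLp 2 fun _ => 1 / (Fintype.card ι + 1), fun i => by simp; positivity, ?_⟩
  simp only [Finset.sum_const, Finset.card_univ, nsmul_eq_mul]
  rw [mul_one_div, div_lt_one (by positivity)]
  linarith

theorem nonempty_frontier_cornerSimplex_homeomorph_sphere {m : ℕ} (hm : Fintype.card ι = m) :
    Nonempty (frontier (cornerSimplex ι) ≃ₜ sphere (0 : EuclideanSpace ℝ (Fin m)) 1) := by
  obtain ⟨h, -, -, hf⟩ := exists_homeomorph_image_interior_closure_frontier_eq_unitBall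
    (s := cornerSimplex ι) convex_cornerSimplex nonempty_interior_cornerSimplex
    isBounded_cornerSimplex
  let e := LinearIsometryEquiv.piLpCongrLeft 2 ℝ ℝ (Fintype.equivFinOfCardEq hm)
  exact ⟨(h.image _).trans (Homeomorph.setCongr hf) |>.trans
    (e.toHomeomorph.subtype fun x => by
      simp only [mem_sphere_zero_iff_norm, LinearIsometryEquiv.coe_toHomeomorph,
        LinearIsometryEquiv.norm_map])⟩

end CornerSimplex

theorem ContinuousMap.homotopic_of_forall_segment_subset {X E : Type*} [TopologicalSpace X]
    [AddCommGroup E] [TopologicalSpace E] [IsTopologicalAddGroup E] [Module ℝ E]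
    [ContinuousSMul ℝ E] {p : E → Prop} {f g : C(X, Subtype p)}
    (h : ∀ x, segment ℝ (f x : E) (g x) ⊆ {y | p y}) : f.Homotopic g :=
  let F := Homotopy.affine ((⟨Subtype.val, continuous_subtype_val⟩ : C(Subtype p, E)).comp f)
    ((⟨Subtype.val, continuous_subtype_val⟩ : C(Subtype p, E)).comp g)
  ⟨{ toFun q := ⟨F q, h q.2 (by rw [← Path.range_segment]; exact ⟨q.1, rfl⟩)⟩
     continuous_toFun := F.continuous.subtype_mk _
     map_zero_left x := by ext; simp [F]
     map_one_left x := by ext; simp [F] }⟩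

section RestrictExtend

variable {V : Type} (A : Finset V)

def restrictCompl (f : V → ℝ) : EuclideanSpace ℝ {v // v ∉ A} :=
  WithLp.toLp 2 fun b => f b

variable {A} in
lemma continuous_restrictCompl : Continuous (restrictCompl A) :=
  (PiLp.continuous_toLp 2 _).comp (continuous_pi fun _ => continuous_apply _)

variable [Fintype V] [DecidableEq V]

def extendCompl (a : V) (x : EuclideanSpace ℝ {v // v ∉ A}) : V → ℝ := fun v =>
  if h : v ∈ A then (if v = a then 1 - ∑ b, x b else 0) else x ⟨v, h⟩

variable {A}

lemma sum_restrictCompl_add (f : V → ℝ) :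
    ∑ b, restrictCompl A f b + ∑ v ∈ A, f v = ∑ v, f v := by
  rw [← Finset.sum_add_sum_compl A f, add_comm,
    Finset.sum_subtype Aᶜ (p := (· ∉ A)) fun _ => Finset.mem_compl]
  rfl

lemma extendCompl_of_notMem {a v : V} (x : EuclideanSpace ℝ {v // v ∉ A}) (hv : v ∉ A) :
    extendCompl A a x v = x ⟨v, hv⟩ :=
  dif_neg hv

lemma restrictCompl_extendCompl (a : V) (x : EuclideanSpace ℝ {v // v ∉ A}) :
    restrictCompl A (extendCompl A a x) = x := by
  ext b
  exact extendCompl_of_notMem x b.2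

lemma sum_extendCompl {a : V} (ha : a ∈ A) (x : EuclideanSpace ℝ {v // v ∉ A}) :
    ∑ v, extendCompl A a x v = 1 := by
  have hA : ∑ v ∈ A, extendCompl A a x v = 1 - ∑ b, x b := by
    have h : ∀ v ∈ A, extendCompl A a x v = if v = a then 1 - ∑ b, x b else 0 :=
      fun v hv => dif_pos hv
    rw [Finset.sum_congr rfl h, Finset.sum_ite_eq' A a, if_pos ha]
  rw [← sum_restrictCompl_add, restrictCompl_extendCompl, hA]
  ring

lemma extendCompl_restrictCompl_of_forall_mem (a : V) {f : V → ℝ}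
    (hf : ∑ v, f v = 1) (hA : ∀ v ∈ A, f v = 0) : extendCompl A a (restrictCompl A f) = f := by
  have hB : ∑ b, restrictCompl A f b = 1 := by
    rw [← hf, ← sum_restrictCompl_add f, Finset.sum_eq_zero hA, add_zero]
  funext v
  by_cases hv : v ∈ A
  · simp [extendCompl, hv, hA v hv, hB]
  · exact extendCompl_of_notMem _ hv

lemma continuous_extendCompl (a : V) : Continuous (extendCompl A a) := by
  refine continuous_pi fun v => ?_
  unfold extendCompl
  split_ifs <;> fun_prop

lemma restrictCompl_mem_frontier {f : V → ℝ} (hf : f ∈ stdSimplex ℝ V)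
    (hface : (∃ v ∉ A, f v = 0) ∨ ∀ v ∈ A, f v = 0) :
    restrictCompl A f ∈ frontier (cornerSimplex {v // v ∉ A}) := by
  have hsum := sum_restrictCompl_add (A := A) f
  rw [hf.2] at hsum
  refine mem_frontier_cornerSimplex.2 ⟨⟨fun b => hf.1 b, ?_⟩, ?_⟩
  · linarith [Finset.sum_nonneg fun v (_ : v ∈ A) => hf.1 v]
  · rcases hface with ⟨v, hv, hv0⟩ | hA
    · exact Or.inr ⟨⟨v, hv⟩, hv0⟩
    · rw [Finset.sum_eq_zero hA] at hsum
      exact Or.inl (by linarith)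

lemma extendCompl_mem_stdSimplex {a : V} (ha : a ∈ A) {x : EuclideanSpace ℝ {v // v ∉ A}}
    (hx : x ∈ cornerSimplex {v // v ∉ A}) : extendCompl A a x ∈ stdSimplex ℝ V := by
  refine ⟨fun v => ?_, sum_extendCompl ha x⟩
  unfold extendCompl
  split_ifs
  · linarith [hx.2]
  · rfl
  · exact hx.1 _

lemma extendCompl_face (a : V) {x : EuclideanSpace ℝ {v // v ∉ A}}
    (hx : ∑ b, x b = 1 ∨ ∃ b, x b = 0) :
    (∃ v ∉ A, extendCompl A a x v = 0) ∨ ∀ v ∈ A, extendCompl A a x v = 0 := by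
  rcases hx with hx | ⟨b, hb⟩
  · exact Or.inr fun v hv => by simp [extendCompl, hv, hx]
  · exact Or.inl ⟨b, b.2, by rw [extendCompl_of_notMem x b.2, hb]⟩

lemma segment_extendCompl_restrictCompl_subset {a : V} (ha : a ∈ A) {f : V → ℝ}
    (hf : f ∈ stdSimplex ℝ V) (hface : (∃ v ∉ A, f v = 0) ∨ ∀ v ∈ A, f v = 0) :
    segment ℝ (extendCompl A a (restrictCompl A f)) f ⊆
      {g | g ∈ stdSimplex ℝ V ∧ ((∃ v ∉ A, g v = 0) ∨ ∀ v ∈ A, g v = 0)} := by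
  rcases hface with ⟨v, hv, hv0⟩ | hA
  · have hS : Convex ℝ {g : V → ℝ | g ∈ stdSimplex ℝ V ∧ g v = 0} :=
      (convex_stdSimplex ℝ V).inter (convex_hyperplane (LinearMap.proj v).isLinear 0)
    refine (hS.segment_subset ⟨?_, ?_⟩ ⟨hf, hv0⟩).trans fun g hg => ⟨hg.1, Or.inl ⟨v, hv, hg.2⟩⟩
    · exact extendCompl_mem_stdSimplex ha
        (mem_frontier_cornerSimplex.1 (restrictCompl_mem_frontier hf (Or.inl ⟨v, hv, hv0⟩))).1
    · rw [extendCompl_of_notMem _ hv]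
      exact hv0
  · rw [extendCompl_restrictCompl_of_forall_mem a hf.2 hA, segment_same]
    exact Set.singleton_subset_iff.2 ⟨hf, Or.inr hA⟩

end RestrictExtend

namespace Cplx

variable {V : Type} [Fintype V] [DecidableEq V]

def simplexBoundary (A : Finset V) : Cplx V where
  faces σ := σ ⊂ A
  down_closed _ _ hst h := Finset.ssubset_of_subset_of_ssubset hst h

lemma dual_simplexBoundary_faces_iff {A σ : Finset V} :
    (simplexBoundary A).dual.faces σ ↔ (∃ v ∉ A, v ∉ σ) ∨ ∀ v ∈ A, v ∉ σ := by
  change ¬ σᶜ ⊂ A ↔ _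
  rw [Finset.ssubset_iff_subset_ne, not_and_or, not_ne_iff, Finset.Subset.antisymm_iff]
  simp only [Finset.subset_iff, Finset.mem_compl]
  grind

open Classical in
lemma dual_simplexBoundary_space_iff {A : Finset V} {f : V → ℝ} :
    ((∑ v, f v = 1) ∧ (∀ v, 0 ≤ f v) ∧
      (simplexBoundary A).dual.faces (Finset.univ.filter fun v => f v ≠ 0)) ↔
    f ∈ stdSimplex ℝ V ∧ ((∃ v ∉ A, f v = 0) ∨ ∀ v ∈ A, f v = 0) := by
  simp only [dual_simplexBoundary_faces_iff, Finset.mem_filter, Finset.mem_univ, true_and,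
    not_not, stdSimplex, Set.mem_ofPred_eq, and_assoc]
  grind

variable {A : Finset V}

def dualSimplexBoundaryToFrontier :
    C((simplexBoundary A).dual.space, frontier (cornerSimplex {v // v ∉ A})) where
  toFun f :=
    have hf := dual_simplexBoundary_space_iff.1 f.2
    ⟨restrictCompl A f.1, restrictCompl_mem_frontier hf.1 hf.2⟩
  continuous_toFun := (continuous_restrictCompl.comp continuous_subtype_val).subtype_mk _

def frontierToDualSimplexBoundary {a : V} (ha : a ∈ A) :
    C(frontier (cornerSimplex {v // v ∉ A}), (simplexBoundary A).dual.space) where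
  toFun x :=
    have hx := mem_frontier_cornerSimplex.1 x.2
    ⟨extendCompl A a x, dual_simplexBoundary_space_iff.2
      ⟨extendCompl_mem_stdSimplex ha hx.1, extendCompl_face a hx.2⟩⟩
  continuous_toFun := ((continuous_extendCompl a).comp continuous_subtype_val).subtype_mk _

def dualSimplexBoundaryHomotopyEquiv {a : V} (ha : a ∈ A) :
    ContinuousMap.HomotopyEquiv (simplexBoundary A).dual.space
      (frontier (cornerSimplex {v // v ∉ A})) where
  toFun := dualSimplexBoundaryToFrontier
  invFun := frontierToDualSimplexBoundary ha
  left_inv := ContinuousMap.homotopic_of_forall_segment_subset fun f =>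
    have hf := dual_simplexBoundary_space_iff.1 f.2
    (segment_extendCompl_restrictCompl_subset ha hf.1 hf.2).trans
      fun _ hg => dual_simplexBoundary_space_iff.2 hg
  right_inv := by
    have hid : dualSimplexBoundaryToFrontier.comp (frontierToDualSimplexBoundary ha) =
        ContinuousMap.id _ :=
      ContinuousMap.ext fun x => Subtype.ext (restrictCompl_extendCompl a x.1)
    rw [hid]

end Cplx

lemma bdSimplex_eq_simplexBoundary (n k : ℕ) :
    bdSimplex n k = Cplx.simplexBoundary (Finset.univ.filter fun i : Fin (n + 1) => (i : ℕ) ≤ k) :=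
  rfl

lemma card_notMem_filter_val_le (n k : ℕ) :
    Fintype.card {i : Fin (n + 1) // i ∉ Finset.univ.filter fun i : Fin (n + 1) => (i : ℕ) ≤ k} =
      n - k := by
  rw [Fintype.card_subtype_compl, Fintype.card_coe]
  simp only [← Nat.lt_add_one_iff, Fin.card_filter_val_lt, Fintype.card_fin]
  omega

theorem dual_bdSimplex_homotopyEquiv_sphere_general (n k : ℕ) :
    Nonempty (ContinuousMap.HomotopyEquiv (bdSimplex n k).dual.space
      (Metric.sphere (0 : EuclideanSpace ℝ (Fin (n - k))) 1)) := by
  obtain ⟨e⟩ := nonempty_frontier_cornerSimplex_homeomorph_sphere (card_notMem_filter_val_le n k)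
  rw [bdSimplex_eq_simplexBoundary]
  exact ⟨(Cplx.dualSimplexBoundaryHomotopyEquiv (a := 0) (by simp)).trans e.toHomotopyEquiv⟩

/-- Proposition 4.10: for `k ≤ n`, the combinatorial Alexander dual of `∂Δ(n,k)` is
homotopy equivalent to the sphere `S^{n-k-1}`. -/
theorem dual_bdSimplex_homotopyEquiv_sphere (n k : ℕ) (hkn : k ≤ n) :
    Nonempty (ContinuousMap.HomotopyEquiv (bdSimplex n k).dual.space
      (Metric.sphere (0 : EuclideanSpace ℝ (Fin (n - k))) 1)) :=
  dual_bdSimplex_homotopyEquiv_sphere_general n k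
end

section
/- Let G be a bipartite graph. Then the graph G^⋈ is isomorphic to the cartesian product G × P_2. -/
open SimpleGraph

/-- The graph `G^⋈`: vertex set `V(G) × {+,-}`, with `(v,+)` adjacent to `(w,-)`
exactly when `w` lies in the closed neighborhood of `v`. -/
def bowtie {V : Type} (G : SimpleGraph V) : SimpleGraph (V × Bool) where
  Adj x y :=
    (x.2 = true ∧ y.2 = false ∧ (y.1 = x.1 ∨ G.Adj x.1 y.1)) ∨
    (x.2 = false ∧ y.2 = true ∧ (x.1 = y.1 ∨ G.Adj y.1 x.1))
  symm := by
    constructor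
    rintro x y (h | h)
    · exact Or.inr ⟨h.2.1, h.1, h.2.2⟩
    · exact Or.inl ⟨h.2.1, h.1, h.2.2⟩
  loopless := by
    constructor
    rintro ⟨a, sa⟩ (⟨h1, h2, _⟩ | ⟨h1, h2, _⟩) <;> simp_all

/-
Flipping the sign of every vertex in one colour class of a 2-colouring `c` turns `G^⋈` into
`G × P_2`: the edge `(v,+)(v,-)` becomes a `P_2`-edge of the fibre over `v`, and an edge
`(v,+)(w,-)` with `v ~ w` joins vertices of equal sign since `c v ≠ c w`.
-/

namespace SimpleGraph

variable {α β γ : Type*}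

def Iso.boxProdRight {G : SimpleGraph α} {H : SimpleGraph β} {H' : SimpleGraph γ}
    (e : H ≃g H') : G.boxProd H ≃g G.boxProd H' where
  toEquiv := (Equiv.refl α).prodCongr e.toEquiv
  map_rel_iff' := by simp [boxProd_adj, e.map_adj_iff]

variable {V : Type}

theorem bowtie_adj {G : SimpleGraph V} {x y : V × Bool} :
    (bowtie G).Adj x y ↔ x.2 ≠ y.2 ∧ (x.1 = y.1 ∨ G.Adj x.1 y.1) := by
  obtain ⟨v, s⟩ := x
  obtain ⟨w, t⟩ := y
  simp only [bowtie, G.adj_comm w v, eq_comm (a := w)]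
  cases s <;> cases t <;> simp

theorem bowtie_adj_iff_boxProd_adj (G : SimpleGraph V) (c : G.Coloring Bool) {v w : V}
    {s t : Bool} : (bowtie G).Adj (v, s) (w, t) ↔
      (G.boxProd ⊤).Adj (v, xor s (c v)) (w, xor t (c w)) := by
  rw [bowtie_adj, boxProd_adj, top_adj]
  by_cases hvw : v = w
  · subst hvw
    simp
  · have key : G.Adj v w → (xor s (c v) = xor t (c w) ↔ s ≠ t) := fun hadj => by
      have hc := c.valid hadj
      revert hc; cases s <;> cases t <;> cases c v <;> cases c w <;> simp
    simp only [hvw, false_or, and_false, or_false]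
    constructor
    · exact fun ⟨hst, hadj⟩ => ⟨hadj, (key hadj).2 hst⟩
    · exact fun ⟨hadj, h⟩ => ⟨(key hadj).1 h, hadj⟩

def bowtieIsoBoxProdOfColoring (G : SimpleGraph V) (c : G.Coloring Bool) :
    bowtie G ≃g G.boxProd (⊤ : SimpleGraph Bool) where
  toEquiv := Function.Involutive.toPerm (fun x => (x.1, xor x.2 (c x.1))) fun x => by simp
  map_rel_iff' := (bowtie_adj_iff_boxProd_adj G c).symm

end SimpleGraph

/-- Lemma 5.5: for a bipartite graph `G`, the graph `G^⋈` is isomorphic to the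
cartesian product `G × P_2`. -/
theorem bowtie_iso_boxProd_path {V : Type} (G : SimpleGraph V) (h : G.Colorable 2) :
    Nonempty (bowtie G ≃g G.boxProd (pathGraph 2)) := by
  obtain ⟨c⟩ := h
  have hpath : (⊤ : SimpleGraph Bool) ≃g pathGraph 2 :=
    pathGraph_two_eq_top ▸ Iso.completeGraph finTwoEquiv.symm
  exact ⟨(Iso.boxProdRight hpath).comp
    (bowtieIsoBoxProdOfColoring G ((Iso.completeGraph finTwoEquiv).toHom.comp c))⟩
end

section
/- Let G be a non-empty finite simple graph whose minimum degree is at least 2. Assume that for every vertex v of G of degree 2 there exists a vertex a satisfying: (1) a ∉ N_G[v]; (2) N_G(v) ≠ N_G(a); (3) for every vertex u ∈ N_G(v) of degree 2, a ∉ N_G(u). Then the dominance complex D(G) is 1-connected (path-connected with trivial fundamental group). -/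
open SimpleGraph

/-- The dominance complex of a graph: the faces are the subsets of the vertex set
whose complement is a dominating set. -/
def domCpx {V : Type} [Fintype V] [DecidableEq V] (G : SimpleGraph V) : Cplx V where
  faces σ := ∀ v : V, ∃ w : V, w ∉ σ ∧ (w = v ∨ G.Adj w v)
  down_closed := by
    intro σ τ hst h v
    obtain ⟨w, hw, h2⟩ := h v
    exact ⟨w, fun hc => hw (hst hc), h2⟩

/-- The closed neighborhood of a vertex. -/
def closedNbhd {V : Type} (G : SimpleGraph V) (v : V) : Set V := {u | u = v ∨ G.Adj v u}

/-!
Since every closed neighbourhood has at least three vertices, every set of at most two vertices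
is a face of `D(G)`: the 1-skeleton is complete. A triple `{a, b, c}` that is not a face is the
closed neighbourhood of a vertex `u` of degree 2, and the vertex `x` supplied for `u` cones off
its boundary: `τ ∪ {x}` is a face for every `τ ⊆ {a, b, c}` with at most two elements. Hence
the edge paths satisfy the triangle relation `[ab][bc] = [ac]`.

The open star of a vertex is star-convex about that vertex, hence simply connected. By the
Lebesgue number lemma, a path is a concatenation of pieces each inside one open star, and a
piece inside the star of `v` is homotopic to the route `x → v → y`. Using the triangle relation,
these routes compose to the edge route `x → v → w → y`, independently of the path, so any two
paths with the same endpoints are homotopic.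
-/

open Set Topology Convex

section PathHomotopy

variable {X : Type*} [TopologicalSpace X]

open Path.Homotopic.Quotient

theorem Path.Homotopic.of_range_subset {s : Set X} (hs : IsSimplyConnected s) {x y : X}
    {p q : Path x y} (hp : range p ⊆ s) (hq : range q ⊆ s) : p.Homotopic q := by
  have := hs.simplyConnectedSpace
  have hx : x ∈ s := p.source ▸ hp (mem_range_self 0)
  have hy : y ∈ s := p.target ▸ hp (mem_range_self 1)
  let lift (γ : Path x y) (hγ : range γ ⊆ s) : Path (⟨x, hx⟩ : s) ⟨y, hy⟩ :=
    { toFun t := ⟨γ t, hγ (mem_range_self t)⟩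
      source' := by simp
      target' := by simp }
  exact (SimplyConnectedSpace.paths_homotopic (lift p hp) (lift q hq)).map
    ⟨Subtype.val, continuous_subtype_val⟩

theorem Path.Homotopic.Quotient.trans_symm_trans {x y z : X} (γ : Path.Homotopic.Quotient x y)
    (δ : Path.Homotopic.Quotient x z) : γ.trans (γ.symm.trans δ) = δ := by
  rw [← trans_assoc, trans_symm, refl_trans]

theorem Path.Homotopic.Quotient.symm_trans_trans {x y z : X} (γ : Path.Homotopic.Quotient x y)
    (δ : Path.Homotopic.Quotient y z) : γ.symm.trans (γ.trans δ) = δ := by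
  rw [← trans_assoc, symm_trans, refl_trans]

theorem Path.Homotopic.Quotient.mk_eq_of_cocycle {ι : Type*} {U : ι → Set X}
    (hU : ∀ i, IsOpen (U i)) (hcover : ∀ x, ∃ i, x ∈ U i)
    (c : ∀ x y : X, Path.Homotopic.Quotient x y) (hc : ∀ x y z, (c x y).trans (c y z) = c x z)
    (hloc : ∀ i {x y : X} (p : Path x y), range p ⊆ U i → mk p = c x y)
    {x y : X} (p : Path x y) : mk p = c x y := by
  obtain ⟨t, ht0, hmono, ⟨n, htn⟩, hsub⟩ := exists_monotone_Icc_subset_open_cover_unitInterval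
    (fun i => (hU i).preimage p.continuous) (fun s _ => mem_iUnion.2 (hcover (p s)))
  have hpiece (k : ℕ) : mk (p.subpath (t k) (t (k + 1))) = c _ _ := by
    obtain ⟨i, hi⟩ := hsub k
    exact hloc i _ (by
      rw [Path.range_subpath_of_le _ _ _ (hmono k.le_succ)]
      exact image_subset_iff.2 hi)
  have hinit (k : ℕ) : mk (p.subpath (t 0) (t (k + 1))) = c _ _ := by
    induction k with
    | zero => exact hpiece 0
    | succ k ih =>
      rw [← eq.2 ⟨Path.Homotopy.subpathTransSubpath p _ (t (k + 1)) _⟩, mk_trans, ih,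
        hpiece, hc]
  have hall := hinit n
  rw [ht0, htn (n + 1) (by omega), Path.subpath_zero_one, mk_cast] at hall
  have hcast : ∀ {x' y' : X} (hx : x' = x) (hy : y' = y), c x' y' = (c x y).cast hx hy := by
    rintro _ _ rfl rfl; exact (cast_rfl_rfl _).symm
  rw [hcast p.source p.target] at hall
  simpa using congrArg (fun γ => γ.cast p.source.symm p.target.symm) hall

theorem simplyConnectedSpace_of_cocycle [Nonempty X] {ι : Type*} {U : ι → Set X}
    (hU : ∀ i, IsOpen (U i)) (hcover : ∀ x, ∃ i, x ∈ U i)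
    (c : ∀ x y : X, Path.Homotopic.Quotient x y) (hc : ∀ x y z, (c x y).trans (c y z) = c x z)
    (hloc : ∀ i {x y : X} (p : Path x y), range p ⊆ U i → mk p = c x y) :
    SimplyConnectedSpace X := by
  rw [simply_connected_iff_paths_homotopic]
  refine ⟨⟨inferInstance, fun x y => ?_⟩, fun x y => ⟨fun P Q => ?_⟩⟩
  · obtain ⟨p, -⟩ := mk_surjective (c x y)
    exact ⟨p⟩
  · induction P with | mk p => ?_
    induction Q with | mk q => ?_
    rw [mk_eq_of_cocycle hU hcover c hc hloc, mk_eq_of_cocycle hU hcover c hc hloc]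

variable {E : Type*} [AddCommGroup E] [Module ℝ E] [TopologicalSpace E] [ContinuousAdd E]
  [ContinuousSMul ℝ E]

theorem StarConvex.isSimplyConnected_preimage_val {P : E → Prop} {T : Set E} {c : E}
    (hT : StarConvex ℝ c ({z | P z} ∩ T)) (hne : ({z | P z} ∩ T).Nonempty) :
    IsSimplyConnected ((Subtype.val : Subtype P → E) ⁻¹' T) := by
  rw [← IsEmbedding.subtypeVal.isSimplyConnected_image, image_preimage_eq_range_inter,
    Subtype.range_coe_subtype]
  have := hT.contractibleSpace hne
  exact SimplyConnectedSpace.ofContractible _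

def Path.subtypeMk {P : X → Prop} {x y : Subtype P} (γ : Path x.1 y.1) (hγ : ∀ t, P (γ t)) :
    Path x y where
  toFun t := ⟨γ t, hγ t⟩
  continuous_toFun := γ.continuous.subtype_mk _
  source' := Subtype.ext γ.source
  target' := Subtype.ext γ.target

theorem Path.range_subtypeMk_subset {P : X → Prop} {x y : Subtype P} (γ : Path x.1 y.1)
    (hγ : ∀ t, P (γ t)) : range (γ.subtypeMk hγ) ⊆ Subtype.val ⁻¹' range γ := by
  rintro _ ⟨t, rfl⟩
  exact mem_range_self t

end PathHomotopy

namespace Cplx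

section Realization

variable {V : Type} [Fintype V]

def geomSimplex (σ : Finset V) : Set (V → ℝ) :=
  stdSimplex ℝ V ∩ {f | Function.support f ⊆ σ}

theorem convex_geomSimplex (σ : Finset V) : Convex ℝ (geomSimplex σ) := by
  refine (convex_stdSimplex ℝ V).inter fun f hf g hg a b _ _ _ => ?_
  exact (Function.support_add _ _).trans (union_subset
    ((Function.support_smul_subset_right _ _).trans hf)
    ((Function.support_smul_subset_right _ _).trans hg))

theorem single_mem_geomSimplex [DecidableEq V] {σ : Finset V} {v : V} (hv : v ∈ σ) :
    Pi.single v 1 ∈ geomSimplex σ :=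
  ⟨single_mem_stdSimplex ℝ v, Pi.support_single_subset.trans (by simpa using hv)⟩

variable (K : Cplx V)

-- `K.space` is the subtype of `K.carrier`.
open Classical in
def carrier : Set (V → ℝ) :=
  {f | (∑ v, f v = 1) ∧ (∀ v, 0 ≤ f v) ∧ K.faces (Finset.univ.filter fun v => f v ≠ 0)}

theorem mem_carrier_iff {f : V → ℝ} : f ∈ K.carrier ↔ ∃ σ, K.faces σ ∧ f ∈ geomSimplex σ := by
  classical
  constructor
  · rintro ⟨hsum, hnonneg, hface⟩
    exact ⟨_, hface, ⟨hnonneg, hsum⟩, fun v hv => by simpa using hv⟩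
  · rintro ⟨σ, hσ, ⟨hnonneg, hsum⟩, hsupp⟩
    exact ⟨hsum, hnonneg, K.down_closed (fun v hv => hsupp (by simpa using hv)) hσ⟩

theorem geomSimplex_subset_carrier {σ : Finset V} (hσ : K.faces σ) :
    geomSimplex σ ⊆ K.carrier :=
  fun _ hf => K.mem_carrier_iff.2 ⟨σ, hσ, hf⟩

def openStar (v : V) : Set K.space := (Subtype.val : K.space → V → ℝ) ⁻¹' {f | 0 < f v}

def closedSimplex (σ : Finset V) : Set K.space :=
  (Subtype.val : K.space → V → ℝ) ⁻¹' geomSimplex σ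

theorem isOpen_openStar (v : V) : IsOpen (K.openStar v) :=
  isOpen_lt continuous_const ((continuous_apply v).comp continuous_subtype_val)

theorem exists_apply_pos (x : K.space) : ∃ v, 0 < x.1 v :=
  have hsum : ∑ v, (0 : V → ℝ) v < ∑ v, x.1 v := by simp [x.2.1]
  let ⟨v, _, hv⟩ := Finset.exists_lt_of_sum_lt hsum
  ⟨v, hv⟩

theorem starConvex_carrier_inter_pos [DecidableEq V] (v : V) :
    StarConvex ℝ (Pi.single v 1) (K.carrier ∩ {f | 0 < f v}) := by
  refine starConvex_iff_segment_subset.2 fun f ⟨hf, hfv⟩ => ?_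
  obtain ⟨σ, hσ, hfσ⟩ := K.mem_carrier_iff.1 hf
  have hvσ : v ∈ σ := hfσ.2 hfv.ne'
  refine subset_inter
    ((K.geomSimplex_subset_carrier hσ).trans' ((convex_geomSimplex σ).segment_subset
      (single_mem_geomSimplex hvσ) hfσ))
    ((convex_halfSpace_gt (f := fun g : V → ℝ => g v) ⟨fun _ _ => rfl, fun _ _ => rfl⟩ 0)
      |>.segment_subset (by simp) hfv)

theorem isSimplyConnected_openStar [DecidableEq V] {v : V} (hv : K.faces {v}) :
    IsSimplyConnected (K.openStar v) :=
  StarConvex.isSimplyConnected_preimage_val (K.starConvex_carrier_inter_pos v)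
    ⟨_, K.geomSimplex_subset_carrier hv (single_mem_geomSimplex (Finset.mem_singleton_self v)),
      by simp⟩

theorem isSimplyConnected_closedSimplex [DecidableEq V] {σ : Finset V} (hσ : K.faces σ)
    (hne : σ.Nonempty) : IsSimplyConnected (K.closedSimplex σ) := by
  obtain ⟨v, hv⟩ := hne
  have hinter : K.carrier ∩ geomSimplex σ = geomSimplex σ :=
    inter_eq_right.2 (K.geomSimplex_subset_carrier hσ)
  refine StarConvex.isSimplyConnected_preimage_val (c := Pi.single v 1) ?_ ?_
  · show StarConvex ℝ _ (K.carrier ∩ geomSimplex σ)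
    rw [hinter]
    exact (convex_geomSimplex σ).starConvex (single_mem_geomSimplex hv)
  · show (K.carrier ∩ geomSimplex σ).Nonempty
    rw [hinter]
    exact ⟨_, single_mem_geomSimplex hv⟩

def segment (x y : K.space) (h : [x.1 -[ℝ] y.1] ⊆ K.carrier) : Path x y :=
  (Path.segment x.1 y.1).subtypeMk fun t => h (Path.range_segment x.1 y.1 ▸ mem_range_self t)

theorem range_segment_subset {x y : K.space} (h : [x.1 -[ℝ] y.1] ⊆ K.carrier)
    {T : Set (V → ℝ)} (hT : [x.1 -[ℝ] y.1] ⊆ T) :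
    range (K.segment x y h) ⊆ Subtype.val ⁻¹' T := by
  refine (Path.range_subtypeMk_subset _ _).trans (preimage_mono ?_)
  rw [Path.range_segment]
  exact hT

end Realization

section EdgePaths

open Path.Homotopic.Quotient

local notation "⟦" p "⟧ₕ" => Path.Homotopic.Quotient.mk p

variable {V : Type} [Fintype V] [DecidableEq V] (K : Cplx V)
  (hedge : ∀ a b : V, K.faces {a, b})

def TrianglesConed : Prop :=
  ∀ a b c : V, ¬ K.faces {a, b, c} →
    ∃ x, ∀ τ ⊆ {a, b, c}, τ.card ≤ 2 → K.faces (insert x τ)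

def vertex (v : V) : K.space :=
  ⟨Pi.single v 1, K.geomSimplex_subset_carrier (hedge v v) (single_mem_geomSimplex (by simp))⟩

@[simp]
theorem vertex_val (v : V) : (K.vertex hedge v).1 = Pi.single v 1 := rfl

theorem segment_single_subset_geomSimplex {σ : Finset V} {f : V → ℝ} (hf : f ∈ geomSimplex σ)
    {v : V} (hv : v ∈ σ) : [f -[ℝ] Pi.single v 1] ⊆ geomSimplex σ :=
  (convex_geomSimplex σ).segment_subset hf (single_mem_geomSimplex hv)

def edge (v w : V) : Path (K.vertex hedge v) (K.vertex hedge w) :=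
  K.segment _ _ ((K.geomSimplex_subset_carrier (hedge v w)).trans'
    (segment_single_subset_geomSimplex (single_mem_geomSimplex (by simp)) (by simp)))

def toVertex (x : K.space) (v : V) (hv : 0 < x.1 v) : Path x (K.vertex hedge v) :=
  K.segment _ _ (by
    obtain ⟨σ, hσ, hx⟩ := K.mem_carrier_iff.1 x.2
    exact (K.geomSimplex_subset_carrier hσ).trans'
      (segment_single_subset_geomSimplex hx (hx.2 hv.ne')))

theorem range_edge_subset {σ : Finset V} {v w : V} (hv : v ∈ σ) (hw : w ∈ σ) :
    range (K.edge hedge v w) ⊆ K.closedSimplex σ :=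
  K.range_segment_subset _ (segment_single_subset_geomSimplex (single_mem_geomSimplex hv) hw)

theorem range_toVertex_subset_closedSimplex {σ : Finset V} {x : K.space}
    (hx : x.1 ∈ geomSimplex σ) {v : V} (hv : 0 < x.1 v) :
    range (K.toVertex hedge x v hv) ⊆ K.closedSimplex σ :=
  K.range_segment_subset _ (segment_single_subset_geomSimplex hx (hx.2 hv.ne'))

theorem range_toVertex_subset_openStar (x : K.space) {v : V} (hv : 0 < x.1 v) :
    range (K.toVertex hedge x v hv) ⊆ K.openStar v :=
  K.range_segment_subset _ (by
    rw [segment_symm]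
    exact ((K.starConvex_carrier_inter_pos v).segment_subset ⟨x.2, hv⟩).trans inter_subset_right)

theorem mk_toVertex_symm_trans (x : K.space) {v w : V} (hv : 0 < x.1 v) (hw : 0 < x.1 w) :
    ⟦K.toVertex hedge x v hv⟧ₕ.symm.trans ⟦K.toVertex hedge x w hw⟧ₕ =
      ⟦K.edge hedge v w⟧ₕ := by
  obtain ⟨σ, hσ, hx⟩ := K.mem_carrier_iff.1 x.2
  rw [← mk_symm, ← mk_trans, eq]
  refine Path.Homotopic.of_range_subset (K.isSimplyConnected_closedSimplex hσ ⟨v, hx.2 hv.ne'⟩)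
    ?_ (K.range_edge_subset hedge (hx.2 hv.ne') (hx.2 hw.ne'))
  rw [Path.trans_range, Path.symm_range]
  exact union_subset (K.range_toVertex_subset_closedSimplex hedge hx hv)
    (K.range_toVertex_subset_closedSimplex hedge hx hw)

theorem mk_edge_self (v : V) : ⟦K.edge hedge v v⟧ₕ = Path.Homotopic.Quotient.refl _ := by
  rw [← K.mk_toVertex_symm_trans hedge (K.vertex hedge v) (by simp) (by simp), symm_trans]

theorem mk_edge_trans_edge_of_faces {σ : Finset V} (hσ : K.faces σ) {a b c : V} (ha : a ∈ σ)
    (hb : b ∈ σ) (hc : c ∈ σ) :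
    ⟦K.edge hedge a b⟧ₕ.trans ⟦K.edge hedge b c⟧ₕ = ⟦K.edge hedge a c⟧ₕ := by
  rw [← mk_trans, eq]
  refine Path.Homotopic.of_range_subset (K.isSimplyConnected_closedSimplex hσ ⟨a, ha⟩) ?_
    (K.range_edge_subset hedge ha hc)
  rw [Path.trans_range]
  exact union_subset (K.range_edge_subset hedge ha hb) (K.range_edge_subset hedge hb hc)

theorem mk_edge_trans_edge (hcone : K.TrianglesConed) (a b c : V) :
    ⟦K.edge hedge a b⟧ₕ.trans ⟦K.edge hedge b c⟧ₕ = ⟦K.edge hedge a c⟧ₕ := by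
  by_cases habc : K.faces {a, b, c}
  · exact K.mk_edge_trans_edge_of_faces hedge habc (by simp) (by simp) (by simp)
  obtain ⟨x, hx⟩ := hcone a b c habc
  have habx := hx {a, b} (by simp [Finset.subset_iff]) Finset.card_le_two
  have hbcx := hx {b, c} (by simp [Finset.subset_iff]) Finset.card_le_two
  have hacx := hx {a, c} (by simp [Finset.subset_iff]) Finset.card_le_two
  have hface {σ : Finset V} (hσ : K.faces σ) (a b c : V) (ha : a ∈ σ) (hb : b ∈ σ)
      (hc : c ∈ σ) := K.mk_edge_trans_edge_of_faces hedge hσ ha hb hc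
  calc ⟦K.edge hedge a b⟧ₕ.trans ⟦K.edge hedge b c⟧ₕ
      = (⟦K.edge hedge a x⟧ₕ.trans ⟦K.edge hedge x b⟧ₕ).trans
          (⟦K.edge hedge b x⟧ₕ.trans ⟦K.edge hedge x c⟧ₕ) := by
        rw [hface habx a x b (by simp) (by simp) (by simp),
          hface hbcx b x c (by simp) (by simp) (by simp)]
    _ = ⟦K.edge hedge a x⟧ₕ.trans
          ((⟦K.edge hedge x b⟧ₕ.trans ⟦K.edge hedge b x⟧ₕ).trans ⟦K.edge hedge x c⟧ₕ) := by
        simp only [trans_assoc]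
    _ = ⟦K.edge hedge a c⟧ₕ := by
        rw [hface habx x b x (by simp) (by simp) (by simp), mk_edge_self, refl_trans,
          hface hacx a x c (by simp) (by simp) (by simp)]

noncomputable def edgeRoute (x y : K.space) (v w : V) (hv : 0 < x.1 v) (hw : 0 < y.1 w) :
    Path.Homotopic.Quotient x y :=
  ⟦K.toVertex hedge x v hv⟧ₕ.trans (⟦K.edge hedge v w⟧ₕ.trans ⟦K.toVertex hedge y w hw⟧ₕ.symm)

theorem edgeRoute_congr (hcone : K.TrianglesConed) {x y : K.space} {v v' w w' : V}
    (hv : 0 < x.1 v) (hv' : 0 < x.1 v') (hw : 0 < y.1 w) (hw' : 0 < y.1 w') :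
    K.edgeRoute hedge x y v w hv hw = K.edgeRoute hedge x y v' w' hv' hw' := by
  rw [edgeRoute, edgeRoute, ← K.mk_edge_trans_edge hedge hcone v' v w',
    ← K.mk_edge_trans_edge hedge hcone v w w', ← K.mk_toVertex_symm_trans hedge x hv' hv,
    ← K.mk_toVertex_symm_trans hedge y hw hw']
  simp only [trans_assoc, trans_symm_trans, trans_symm, trans_refl]

theorem edgeRoute_trans (hcone : K.TrianglesConed) {x y z : K.space} {v w u : V}
    (hv : 0 < x.1 v) (hw : 0 < y.1 w) (hu : 0 < z.1 u) :
    (K.edgeRoute hedge x y v w hv hw).trans (K.edgeRoute hedge y z w u hw hu) =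
      K.edgeRoute hedge x z v u hv hu := by
  simp only [edgeRoute, trans_assoc, symm_trans_trans]
  rw [← trans_assoc ⟦K.edge hedge v w⟧ₕ, K.mk_edge_trans_edge hedge hcone]

noncomputable def edgeClass (x y : K.space) : Path.Homotopic.Quotient x y :=
  K.edgeRoute hedge x y _ _ (K.exists_apply_pos x).choose_spec (K.exists_apply_pos y).choose_spec

theorem mk_eq_edgeClass_of_range_subset (hcone : K.TrianglesConed) {v : V} {x y : K.space}
    (p : Path x y) (hp : range p ⊆ K.openStar v) : ⟦p⟧ₕ = K.edgeClass hedge x y := by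
  have hx : 0 < x.1 v := p.source ▸ hp (mem_range_self 0)
  have hy : 0 < y.1 v := p.target ▸ hp (mem_range_self 1)
  rw [edgeClass, K.edgeRoute_congr hedge hcone _ hx _ hy, edgeRoute, mk_edge_self, refl_trans,
    ← mk_symm, ← mk_trans, eq]
  refine Path.Homotopic.of_range_subset
    (K.isSimplyConnected_openStar (K.down_closed (by simp) (hedge v v))) hp ?_
  rw [Path.trans_range, Path.symm_range]
  exact union_subset (K.range_toVertex_subset_openStar hedge x hx)
    (K.range_toVertex_subset_openStar hedge y hy)

end EdgePaths

theorem simplyConnectedSpace_of_trianglesConed {V : Type} [Fintype V] [DecidableEq V]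
    [Nonempty V] (K : Cplx V) (hedge : ∀ a b : V, K.faces {a, b}) (hcone : K.TrianglesConed) :
    SimplyConnectedSpace K.space :=
  have : Nonempty K.space := ⟨K.vertex hedge (Classical.arbitrary V)⟩
  simplyConnectedSpace_of_cocycle K.isOpen_openStar K.exists_apply_pos (K.edgeClass hedge)
    (fun _ _ _ => K.edgeRoute_trans hedge hcone _ _ _)
    fun _ _ _ => K.mk_eq_edgeClass_of_range_subset hedge hcone

end Cplx

section DominanceComplex

variable {V : Type} [Fintype V] [DecidableEq V] {G : SimpleGraph V} [DecidableRel G.Adj]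

variable (G) in
def closedNbhdFinset (v : V) : Finset V := insert v (G.neighborFinset v)

theorem mem_closedNbhdFinset {u v : V} : u ∈ closedNbhdFinset G v ↔ u ∈ closedNbhd G v := by
  simp [closedNbhdFinset, closedNbhd]

theorem card_closedNbhdFinset (v : V) : (closedNbhdFinset G v).card = G.degree v + 1 := by
  rw [closedNbhdFinset, Finset.card_insert_of_notMem (by simp), card_neighborFinset_eq_degree]

theorem domCpx_faces_iff {σ : Finset V} :
    (domCpx G).faces σ ↔ ∀ v, ¬ closedNbhdFinset G v ⊆ σ := by
  refine forall_congr' fun v => ?_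
  simp only [Finset.not_subset, mem_closedNbhdFinset, closedNbhd, Set.mem_ofPred_eq,
    G.adj_comm v]
  exact exists_congr fun _ => and_comm

theorem domCpx_faces_of_card_le_minDegree {σ : Finset V} (hσ : σ.card ≤ G.minDegree) :
    (domCpx G).faces σ := by
  refine domCpx_faces_iff.2 fun v hv => ?_
  have := Finset.card_le_card hv
  have := G.minDegree_le_degree v
  rw [card_closedNbhdFinset] at *
  omega

theorem closedNbhdFinset_eq_of_subset (hmin : 2 ≤ G.minDegree) {w : V} {τ : Finset V}
    (hw : closedNbhdFinset G w ⊆ τ) (hτ : τ.card ≤ 3) :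
    G.degree w = 2 ∧ closedNbhdFinset G w = τ := by
  have hcard := Finset.card_le_card hw
  have := G.minDegree_le_degree w
  rw [card_closedNbhdFinset] at hcard
  exact ⟨by omega, Finset.eq_of_subset_of_card_le hw (by rw [card_closedNbhdFinset]; omega)⟩

theorem neighborSet_eq_of_subset_closedNbhdFinset {u x : V} (hux : ¬ G.Adj u x)
    (hdeg : G.degree u = G.degree x) (hx : G.neighborFinset x ⊆ closedNbhdFinset G u) :
    G.neighborSet u = G.neighborSet x := by
  have hsub : G.neighborFinset x ⊆ G.neighborFinset u := fun t ht => by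
    rw [mem_neighborFinset] at ht ⊢
    rcases mem_closedNbhdFinset.1 (hx ((mem_neighborFinset _ _ _).2 ht)) with rfl | hut
    · exact absurd ht.symm hux
    · exact hut
  have heq := Finset.eq_of_subset_of_card_le hsub (by simp [hdeg])
  ext t
  rw [mem_neighborSet, mem_neighborSet, ← mem_neighborFinset, ← mem_neighborFinset, heq]

theorem domCpx_faces_insert (hmin : 2 ≤ G.minDegree) {u x : V} (hu : G.degree u = 2)
    (h₁ : x ∉ closedNbhd G u) (h₂ : G.neighborSet u ≠ G.neighborSet x)
    (h₃ : ∀ w, G.Adj u w → G.degree w = 2 → ¬ G.Adj w x) {τ : Finset V}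
    (hτ : τ ⊆ closedNbhdFinset G u) (hcard : τ.card ≤ 2) : (domCpx G).faces (insert x τ) := by
  refine domCpx_faces_iff.2 fun w hw => ?_
  obtain ⟨hdeg, heq⟩ := closedNbhdFinset_eq_of_subset hmin hw
    ((Finset.card_insert_le x τ).trans (by omega))
  have hxw : x ∈ closedNbhdFinset G w := heq ▸ Finset.mem_insert_self x τ
  by_cases hwx : w = x
  · subst hwx
    refine h₂ (neighborSet_eq_of_subset_closedNbhdFinset (fun hux => h₁ (Or.inr hux))
      (hu.trans hdeg.symm) fun t ht => hτ ?_)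
    have ht' : t ∈ insert w τ := heq ▸ Finset.mem_insert_of_mem ht
    exact (Finset.mem_insert.1 ht').resolve_left
      (G.ne_of_adj ((mem_neighborFinset _ _ _).1 ht)).symm
  · have hwτ : w ∈ τ :=
      (Finset.mem_insert.1 (heq ▸ Finset.mem_insert_self w _)).resolve_left hwx
    rcases mem_closedNbhdFinset.1 (hτ hwτ) with rfl | huw
    · exact h₁ (mem_closedNbhdFinset.1 hxw)
    · exact h₃ w huw hdeg ((mem_closedNbhdFinset.1 hxw).resolve_left (Ne.symm hwx))

theorem domCpx_trianglesConed (hmin : 2 ≤ G.minDegree)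
    (h : ∀ v : V, G.degree v = 2 → ∃ a : V,
      a ∉ closedNbhd G v ∧ G.neighborSet v ≠ G.neighborSet a ∧
        ∀ u : V, G.Adj v u → G.degree u = 2 → ¬ G.Adj u a) :
    (domCpx G).TrianglesConed := by
  intro a b c habc
  obtain ⟨u, hu⟩ : ∃ u, closedNbhdFinset G u ⊆ {a, b, c} := by
    simpa [domCpx_faces_iff] using habc
  obtain ⟨hdeg, heq⟩ := closedNbhdFinset_eq_of_subset hmin hu Finset.card_le_three
  obtain ⟨x, h₁, h₂, h₃⟩ := h u hdeg
  exact ⟨x, fun τ hτ hcard => domCpx_faces_insert hmin hdeg h₁ h₂ h₃ (heq ▸ hτ) hcard⟩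

end DominanceComplex

/-- Theorem 5.8: let `G` be a non-empty graph of minimum degree at least `2` such that
every vertex `v` of degree `2` admits a vertex `a` with (1) `a ∉ N[v]`,
(2) `N(v) ≠ N(a)`, and (3) `a` is not adjacent to any degree-`2` neighbor of `v`.
Then the dominance complex of `G` is `1`-connected. -/
theorem dominance_simplyConnected {V : Type} [Fintype V] [DecidableEq V] [Nonempty V]
    (G : SimpleGraph V) [DecidableRel G.Adj] (hmin : 2 ≤ G.minDegree)
    (h : ∀ v : V, G.degree v = 2 → ∃ a : V,
      a ∉ closedNbhd G v ∧ G.neighborSet v ≠ G.neighborSet a ∧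
        ∀ u : V, G.Adj v u → G.degree u = 2 → ¬ G.Adj u a) :
    SimplyConnectedSpace (domCpx G).space :=
  (domCpx G).simplyConnectedSpace_of_trianglesConed
    (fun _ _ => domCpx_faces_of_card_le_minDegree (Finset.card_le_two.trans hmin))
    (domCpx_trianglesConed hmin h)
end
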